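/- arXiv:2302.11441 — 5 statements merged into one kernel-verified Lean document; each statement's English description precedes it below -/
import Mathlib

section
/- With the stated hypotheses, let (e_i) be an orthogonally nice orthonormal basis of 𝔤 and let A be a linear endomorphism of 𝔤 which is diagonal with respect to (e_i), i.e. A(e_i) = a_i e_i for scalars a_i. Then the divergence of A vanishes: Σ_i (∇_{e_i}(A(e_i)) − A(∇_{e_i} e_i)) = 0. -/
open scoped RealInnerProductSpace

/-- Let `𝔤` be a finite-dimensional real Lie algebra (with bracket given by the
antisymmetric bilinear map `bracket` satisfying the Jacobi identity) equipped with an inner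
product, and let `∇` (`nabla`) be the Levi-Civita connection of the corresponding
left-invariant metric.  Let `(e_i)` be an *orthogonally nice* orthonormal basis of `𝔤` and
let `A` be a linear endomorphism of `𝔤` which is diagonal with respect to `(e_i)`.
Then the divergence of `A` vanishes: `Σ_i (∇_{e_i}(A e_i) − A(∇_{e_i} e_i)) = 0`. -/
theorem divergence_eq_zero_of_diagonal_orthogonally_nice
    {𝔤 : Type*} [NormedAddCommGroup 𝔤] [InnerProductSpace ℝ 𝔤] [FiniteDimensional ℝ 𝔤]
    (bracket : 𝔤 →ₗ[ℝ] 𝔤 →ₗ[ℝ] 𝔤)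
    (h_anti : ∀ X Y : 𝔤, bracket X Y = -bracket Y X)
    (h_jacobi : ∀ X Y Z : 𝔤,
      bracket X (bracket Y Z) + bracket Y (bracket Z X) + bracket Z (bracket X Y) = 0)
    (nabla : 𝔤 →ₗ[ℝ] 𝔤 →ₗ[ℝ] 𝔤)
    (h_torsion : ∀ X Y : 𝔤, nabla X Y - nabla Y X = bracket X Y)
    (h_metric : ∀ X Y Z : 𝔤, ⟪nabla X Y, Z⟫ = -⟪Y, nabla X Z⟫)
    {ι : Type*} [Fintype ι] (b : OrthonormalBasis ι ℝ 𝔤)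
    (h_nice : ∀ i j : ι, ∃ (k : ι) (c : ℝ),
      bracket (b i) (b j) = c • b k ∧ k ≠ i ∧ k ≠ j)
    (A : 𝔤 →ₗ[ℝ] 𝔤) (a : ι → ℝ) (hA : ∀ i, A (b i) = a i • b i) :
    ∑ i, (nabla (b i) (A (b i)) - A (nabla (b i) (b i))) = 0 := by
  have hself : ∀ X Y : 𝔤, ⟪Y, nabla X Y⟫ = (0 : ℝ) := by
    intro X Y
    have h := h_metric X Y Y
    have h2 := real_inner_comm Y (nabla X Y)
    linarith
  have key : ∀ i, nabla (b i) (b i) = 0 := by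
    intro i
    have hcoord : ∀ m, ⟪b m, nabla (b i) (b i)⟫ = (0 : ℝ) := by
      intro m
      obtain ⟨k, c, hk, hki, hkm⟩ := h_nice i m
      have ht : nabla (b i) (b m) = bracket (b i) (b m) + nabla (b m) (b i) :=
        sub_eq_iff_eq_add.mp (h_torsion (b i) (b m))
      have h1 : ⟪b i, nabla (b i) (b m)⟫ = (0 : ℝ) := by
        rw [ht, inner_add_right, hself, hk, real_inner_smul_right,
          b.orthonormal.2 (Ne.symm hki)]
        ring
      have h2 := h_metric (b i) (b i) (b m)
      rw [real_inner_comm, h2, h1, neg_zero]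
    have := b.sum_repr' (nabla (b i) (b i))
    rw [← this]
    simp only [hcoord, zero_smul, Finset.sum_const_zero]
  apply Finset.sum_eq_zero
  intro i _
  rw [key i, hA i, map_zero, map_smul, key i, smul_zero, sub_zero]
end

section
/- Let 𝔤 = ℝ⁷ with its standard inner product and standard orthonormal basis e₁,…,e₇, equipped with the Lie bracket determined by the only nonzero basis brackets [e₁,e₂] = −e₅ and [e₁,e₃] = −e₆ (extended bilinearly and antisymmetrically; this is the nilpotent Lie algebra 𝔫₂). Let ∇ be its Levi-Civita product and let A be the diagonal endomorphism A = Diag(0, −1, −1, 0, −1, −1, 0) with respect to (e_i) (this is τ²_{φ₂}). Then the divergence of A vanishes: Σ_{i=1}^{7} (∇_{e_i}(A(e_i)) − A(∇_{e_i} e_i)) = 0. -/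
open scoped RealInnerProductSpace

/-- The standard orthonormal basis vectors of `ℝ⁷` (as a Euclidean space). -/
noncomputable def stdBasis7 : Fin 7 → EuclideanSpace ℝ (Fin 7) :=
  fun i => EuclideanSpace.single i (1 : ℝ)

/-- On the nilpotent Lie algebra `𝔫₂` (`ℝ⁷` with its standard inner product and the Lie
bracket with only nonzero basis brackets `[e₁,e₂] = −e₅` and `[e₁,e₃] = −e₆`), the
divergence of the diagonal endomorphism `A = Diag(0,−1,−1,0,−1,−1,0)` (which is `τ²_{φ₂}`)
with respect to the Levi-Civita product `∇` vanishes: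
`Σ_{i=1}^{7} (∇_{e_i}(A e_i) − A(∇_{e_i} e_i)) = 0`. -/
theorem divergence_tau_sq_n2_eq_zero
    (bracket : EuclideanSpace ℝ (Fin 7) →ₗ[ℝ] EuclideanSpace ℝ (Fin 7) →ₗ[ℝ]
      EuclideanSpace ℝ (Fin 7))
    (h_anti : ∀ X Y, bracket X Y = -bracket Y X)
    (h12 : bracket (stdBasis7 0) (stdBasis7 1) = -stdBasis7 4)
    (h13 : bracket (stdBasis7 0) (stdBasis7 2) = -stdBasis7 5)
    (h_zero : ∀ i j : Fin 7, (i, j) ≠ ((0 : Fin 7), (1 : Fin 7)) →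
      (i, j) ≠ ((0 : Fin 7), (2 : Fin 7)) → (j, i) ≠ ((0 : Fin 7), (1 : Fin 7)) →
      (j, i) ≠ ((0 : Fin 7), (2 : Fin 7)) → bracket (stdBasis7 i) (stdBasis7 j) = 0)
    (nabla : EuclideanSpace ℝ (Fin 7) →ₗ[ℝ] EuclideanSpace ℝ (Fin 7) →ₗ[ℝ]
      EuclideanSpace ℝ (Fin 7))
    (h_torsion : ∀ X Y, nabla X Y - nabla Y X = bracket X Y)
    (h_metric : ∀ X Y Z, ⟪nabla X Y, Z⟫ = -⟪Y, nabla X Z⟫)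
    (A : EuclideanSpace ℝ (Fin 7) →ₗ[ℝ] EuclideanSpace ℝ (Fin 7))
    (hA : ∀ i : Fin 7, A (stdBasis7 i) =
      (![0, -1, -1, 0, -1, -1, 0] : Fin 7 → ℝ) i • stdBasis7 i) :
    ∑ i : Fin 7, (nabla (stdBasis7 i) (A (stdBasis7 i))
      - A (nabla (stdBasis7 i) (stdBasis7 i))) = 0 := by

  -- ⟪∇_X Y, Y⟫ = 0
  have hkk : ∀ X Y, ⟪nabla X Y, Y⟫ = 0 := by
    intro X Y
    have h1 := h_metric X Y Y
    have h2 := real_inner_comm Y (nabla X Y)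
    linarith
  -- ⟪e_i, [e_i, e_k]⟫ = 0 for all i, k
  have hbr : ∀ i k : Fin 7, ⟪stdBasis7 i, bracket (stdBasis7 i) (stdBasis7 k)⟫ = 0 := by
    intro i k
    have simp01 : ⟪stdBasis7 0, (-stdBasis7 4 : EuclideanSpace ℝ (Fin 7))⟫ = 0 := by
      simp [stdBasis7, EuclideanSpace.inner_single_left, EuclideanSpace.single_apply]
    have simp02 : ⟪stdBasis7 0, (-stdBasis7 5 : EuclideanSpace ℝ (Fin 7))⟫ = 0 := by
      simp [stdBasis7, EuclideanSpace.inner_single_left, EuclideanSpace.single_apply]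
    rcases eq_or_ne (i, k) ((0 : Fin 7), (1 : Fin 7)) with h | h01
    · rw [Prod.mk.injEq] at h; rw [h.1, h.2, h12]; exact simp01
    rcases eq_or_ne (i, k) ((0 : Fin 7), (2 : Fin 7)) with h | h02
    · rw [Prod.mk.injEq] at h; rw [h.1, h.2, h13]; exact simp02
    rcases eq_or_ne (k, i) ((0 : Fin 7), (1 : Fin 7)) with h | h10
    · rw [Prod.mk.injEq] at h; rw [h.1, h.2, h_anti, h12]
      simp [stdBasis7, EuclideanSpace.inner_single_left, EuclideanSpace.single_apply]
    rcases eq_or_ne (k, i) ((0 : Fin 7), (2 : Fin 7)) with h | h20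
    · rw [Prod.mk.injEq] at h; rw [h.1, h.2, h_anti, h13]
      simp [stdBasis7, EuclideanSpace.inner_single_left, EuclideanSpace.single_apply]
    rw [h_zero _ _ h01 h02 h10 h20]; simp
  have key : ∀ i : Fin 7, nabla (stdBasis7 i) (stdBasis7 i) = 0 := by
    intro i
    have hcomp : ∀ k : Fin 7, ⟪nabla (stdBasis7 i) (stdBasis7 i), stdBasis7 k⟫ = 0 := by
      intro k
      rw [h_metric]
      have h2 : nabla (stdBasis7 i) (stdBasis7 k)
          = bracket (stdBasis7 i) (stdBasis7 k) + nabla (stdBasis7 k) (stdBasis7 i) :=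
        sub_eq_iff_eq_add.mp (h_torsion _ _)
      rw [h2, inner_add_right]
      have h3 : ⟪stdBasis7 i, nabla (stdBasis7 k) (stdBasis7 i)⟫ = 0 := by
        rw [real_inner_comm]; exact hkk _ _
      rw [h3, hbr i k]; ring
    ext k
    have := hcomp k
    simpa [stdBasis7, EuclideanSpace.inner_single_right] using this
  have hterm : ∀ i : Fin 7, nabla (stdBasis7 i) (A (stdBasis7 i))
      - A (nabla (stdBasis7 i) (stdBasis7 i)) = 0 := by
    intro i
    rw [hA i, map_smul, key i, smul_zero, map_zero, sub_zero]
  simp [hterm]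
end

section
/- Let V = ℝ⁶ with standard basis e₁,…,e₆ and dual basis e¹,…,e⁶, and let ρ⁺ and ρ⁻ be the alternating 3-forms ρ⁺ = e¹³⁵ − e¹⁴⁶ − e²³⁶ − e²⁴⁵ and ρ⁻ = e¹³⁶ + e¹⁴⁵ + e²³⁵ − e²⁴⁶. Then for every linear endomorphism D of V, θ(D)ρ⁺ = 0 if and only if θ(D)ρ⁻ = 0. -/
/-- The standard basis vectors of `ℝ⁶ = Fin 6 → ℝ`. -/
noncomputable def stdB6 : Fin 6 → (Fin 6 → ℝ) := fun i => Pi.basisFun ℝ (Fin 6) i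

/-- Coefficients of `ρ⁺ = e¹³⁵ − e¹⁴⁶ − e²³⁶ − e²⁴⁵` on increasing basis triples
(0-indexed). -/
def rhoPlusCoeff : Fin 6 → Fin 6 → Fin 6 → ℝ := fun i j k =>
  if (i, j, k) = ((0 : Fin 6), (2 : Fin 6), (4 : Fin 6)) then 1
  else if (i, j, k) = ((0 : Fin 6), (3 : Fin 6), (5 : Fin 6)) then -1
  else if (i, j, k) = ((1 : Fin 6), (2 : Fin 6), (5 : Fin 6)) then -1
  else if (i, j, k) = ((1 : Fin 6), (3 : Fin 6), (4 : Fin 6)) then -1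
  else 0

/-- Coefficients of `ρ⁻ = e¹³⁶ + e¹⁴⁵ + e²³⁵ − e²⁴⁶` on increasing basis triples
(0-indexed). -/
def rhoMinusCoeff : Fin 6 → Fin 6 → Fin 6 → ℝ := fun i j k =>
  if (i, j, k) = ((0 : Fin 6), (2 : Fin 6), (5 : Fin 6)) then 1
  else if (i, j, k) = ((0 : Fin 6), (3 : Fin 6), (4 : Fin 6)) then 1
  else if (i, j, k) = ((1 : Fin 6), (2 : Fin 6), (4 : Fin 6)) then 1
  else if (i, j, k) = ((1 : Fin 6), (3 : Fin 6), (5 : Fin 6)) then -1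
  else 0

/-- `(θ(D)γ)(X,Y,Z) = −γ(DX,Y,Z) − γ(X,DY,Z) − γ(X,Y,DZ)`. -/
def theta3 (D : (Fin 6 → ℝ) →ₗ[ℝ] (Fin 6 → ℝ))
    (γ : AlternatingMap ℝ (Fin 6 → ℝ) ℝ (Fin 3)) (X Y Z : Fin 6 → ℝ) : ℝ :=
  -γ ![D X, Y, Z] - γ ![X, D Y, Z] - γ ![X, Y, D Z]

/-! ### Auxiliary machinery -/

/-- Antisymmetrization of a coefficient function. -/
def asym3 (c : Fin 6 → Fin 6 → Fin 6 → ℝ) (i j k : Fin 6) : ℝ :=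
  c i j k - c j i k - c i k j - c k j i + c j k i + c k i j

/-- The linear equation attached to a triple of indices: it is `−θ(D)γ(eᵢ,eⱼ,e_k)`
expressed via the matrix entries `d a b = (D e_b)_a` of `D`. -/
def eqn3 (c : Fin 6 → Fin 6 → Fin 6 → ℝ) (d : Fin 6 → Fin 6 → ℝ) (i j k : Fin 6) : ℝ :=
  ∑ a : Fin 6, (d a i * asym3 c a j k + d a j * asym3 c i a k + d a k * asym3 c i j a)

lemma asym3_swap01 (c : Fin 6 → Fin 6 → Fin 6 → ℝ) (i j k : Fin 6) :
    asym3 c j i k = -asym3 c i j k := by unfold asym3; ring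

lemma asym3_swap12 (c : Fin 6 → Fin 6 → Fin 6 → ℝ) (i j k : Fin 6) :
    asym3 c i k j = -asym3 c i j k := by unfold asym3; ring

lemma eqn3_swap01 (c : Fin 6 → Fin 6 → Fin 6 → ℝ) (d : Fin 6 → Fin 6 → ℝ) (i j k : Fin 6) :
    eqn3 c d j i k = -eqn3 c d i j k := by
  unfold eqn3
  rw [← Finset.sum_neg_distrib]
  exact Finset.sum_congr rfl fun a _ => by unfold asym3; ring

lemma eqn3_swap12 (c : Fin 6 → Fin 6 → Fin 6 → ℝ) (d : Fin 6 → Fin 6 → ℝ) (i j k : Fin 6) :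
    eqn3 c d i k j = -eqn3 c d i j k := by
  unfold eqn3
  rw [← Finset.sum_neg_distrib]
  exact Finset.sum_congr rfl fun a _ => by unfold asym3; ring

/-- A skew-symmetric (in adjacent transpositions) function of three indices which
vanishes on strictly increasing triples vanishes identically. -/
lemma skew_eq_zero (F : Fin 6 → Fin 6 → Fin 6 → ℝ)
    (h01 : ∀ i j k, F j i k = -F i j k)
    (h12 : ∀ i j k, F i k j = -F i j k)
    (h : ∀ i j k, i < j → j < k → F i j k = 0) :
    ∀ i j k, F i j k = 0 := by
  have h02 : ∀ i j k, F k j i = -F i j k := by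
    intro i j k
    have a1 := h01 j k i
    have a2 := h12 j i k
    have a3 := h01 i j k
    linarith
  intro i j k
  rcases lt_trichotomy i j with hij | rfl | hij
  · rcases lt_trichotomy j k with hjk | rfl | hjk
    · exact h i j k hij hjk
    · linarith [h12 i j j]
    · rcases lt_trichotomy i k with hik | rfl | hik
      · linarith [h12 i j k, h i k j hik hjk]
      · linarith [h02 i j i]
      · linarith [h12 i j k, h01 k i j, h k i j hik hij]
  · linarith [h01 i i k]
  · rcases lt_trichotomy i k with hik | rfl | hik
    · linarith [h01 i j k, h j i k hij hik]
    · linarith [h02 i j i]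
    · rcases lt_trichotomy j k with hjk | rfl | hjk
      · linarith [h01 i j k, h12 j i k, h j k i hjk hik]
      · linarith [h12 i j j]
      · linarith [h02 i j k, h k j i hjk hij]

lemma upd0 (x y z w : Fin 6 → ℝ) : Function.update ![x, y, z] 0 w = ![w, y, z] := by
  funext t; fin_cases t <;> simp [Function.update]

lemma upd1 (x y z w : Fin 6 → ℝ) : Function.update ![x, y, z] 1 w = ![x, w, z] := by
  funext t; fin_cases t <;> simp [Function.update]

lemma upd2 (x y z w : Fin 6 → ℝ) : Function.update ![x, y, z] 2 w = ![x, y, w] := by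
  funext t; fin_cases t <;> simp [Function.update]

lemma basis_sum (X : Fin 6 → ℝ) : ∑ b : Fin 6, X b • stdB6 b = X := by
  simpa [stdB6, Pi.basisFun_repr] using (Pi.basisFun ℝ (Fin 6)).sum_repr X

section slots

variable (ρ : AlternatingMap ℝ (Fin 6 → ℝ) ℝ (Fin 3))

lemma slot0 (cf : Fin 6 → ℝ) (g : Fin 6 → (Fin 6 → ℝ)) (Y Z : Fin 6 → ℝ) :
    ρ ![∑ b : Fin 6, cf b • g b, Y, Z] = ∑ b : Fin 6, cf b • ρ ![g b, Y, Z] := by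
  have h := ρ.map_update_sum Finset.univ (0 : Fin 3) (fun b => cf b • g b) ![0, Y, Z]
  rw [upd0] at h
  rw [h]
  refine Finset.sum_congr rfl fun b _ => ?_
  rw [upd0]
  have h2 := ρ.map_update_smul ![g b, Y, Z] (0 : Fin 3) (cf b) (g b)
  rwa [upd0, upd0] at h2

lemma slot1 (cf : Fin 6 → ℝ) (g : Fin 6 → (Fin 6 → ℝ)) (X Z : Fin 6 → ℝ) :
    ρ ![X, ∑ b : Fin 6, cf b • g b, Z] = ∑ b : Fin 6, cf b • ρ ![X, g b, Z] := by
  have h := ρ.map_update_sum Finset.univ (1 : Fin 3) (fun b => cf b • g b) ![X, 0, Z]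
  rw [upd1] at h
  rw [h]
  refine Finset.sum_congr rfl fun b _ => ?_
  rw [upd1]
  have h2 := ρ.map_update_smul ![X, g b, Z] (1 : Fin 3) (cf b) (g b)
  rwa [upd1, upd1] at h2

lemma slot2 (cf : Fin 6 → ℝ) (g : Fin 6 → (Fin 6 → ℝ)) (X Y : Fin 6 → ℝ) :
    ρ ![X, Y, ∑ b : Fin 6, cf b • g b] = ∑ b : Fin 6, cf b • ρ ![X, Y, g b] := by
  have h := ρ.map_update_sum Finset.univ (2 : Fin 3) (fun b => cf b • g b) ![X, Y, 0]
  rw [upd2] at h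
  rw [h]
  refine Finset.sum_congr rfl fun b _ => ?_
  rw [upd2]
  have h2 := ρ.map_update_smul ![X, Y, g b] (2 : Fin 3) (cf b) (g b)
  rwa [upd2, upd2] at h2

lemma rho_swap01 (x y z : Fin 6 → ℝ) : ρ ![y, x, z] = -ρ ![x, y, z] := by
  have h := ρ.map_swap ![x, y, z] (show (0 : Fin 3) ≠ 1 by decide)
  have hv : (![x, y, z] ∘ Equiv.swap (0 : Fin 3) 1) = ![y, x, z] := by
    funext t; fin_cases t <;> simp [Equiv.swap_apply_def]
  rwa [hv] at h

lemma rho_swap12 (x y z : Fin 6 → ℝ) : ρ ![x, z, y] = -ρ ![x, y, z] := by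
  have h := ρ.map_swap ![x, y, z] (show (1 : Fin 3) ≠ 2 by decide)
  have hv : (![x, y, z] ∘ Equiv.swap (1 : Fin 3) 2) = ![x, z, y] := by
    funext t; fin_cases t <;> simp [Equiv.swap_apply_def]
  rwa [hv] at h

/-- Values of an alternating 3-form on all basis triples, from its values on
increasing triples. -/
lemma rho_val (c : Fin 6 → Fin 6 → Fin 6 → ℝ)
    (hc : ∀ i j k : Fin 6, ¬(i < j ∧ j < k) → c i j k = 0)
    (h : ∀ i j k : Fin 6, i < j → j < k → ρ ![stdB6 i, stdB6 j, stdB6 k] = c i j k) :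
    ∀ i j k : Fin 6, ρ ![stdB6 i, stdB6 j, stdB6 k] = asym3 c i j k := by
  have key : ∀ i j k : Fin 6,
      (fun i j k => ρ ![stdB6 i, stdB6 j, stdB6 k] - asym3 c i j k) i j k = 0 := by
    apply skew_eq_zero
    · intro i j k
      show ρ ![stdB6 j, stdB6 i, stdB6 k] - asym3 c j i k =
        -(ρ ![stdB6 i, stdB6 j, stdB6 k] - asym3 c i j k)
      rw [rho_swap01, asym3_swap01]; ring
    · intro i j k
      show ρ ![stdB6 i, stdB6 k, stdB6 j] - asym3 c i k j =
        -(ρ ![stdB6 i, stdB6 j, stdB6 k] - asym3 c i j k)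
      rw [rho_swap12, asym3_swap12]; ring
    · intro i j k hij hjk
      show ρ ![stdB6 i, stdB6 j, stdB6 k] - asym3 c i j k = 0
      rw [h i j k hij hjk]
      have z1 : c j i k = 0 := hc _ _ _ (by rintro ⟨h1, -⟩; exact absurd (hij.trans h1) (lt_irrefl _))
      have z2 : c i k j = 0 := hc _ _ _ (by rintro ⟨-, h2⟩; exact absurd (hjk.trans h2) (lt_irrefl _))
      have z3 : c k j i = 0 := hc _ _ _ (by rintro ⟨h1, -⟩; exact absurd (hjk.trans h1) (lt_irrefl _))
      have z4 : c j k i = 0 := hc _ _ _ (by rintro ⟨-, h2⟩; exact absurd ((hij.trans hjk).trans h2) (lt_irrefl _))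
      have z5 : c k i j = 0 := hc _ _ _ (by rintro ⟨h1, -⟩; exact absurd ((hij.trans hjk).trans h1) (lt_irrefl _))
      unfold asym3
      rw [z1, z2, z3, z4, z5]; ring
  intro i j k
  have h2 : ρ ![stdB6 i, stdB6 j, stdB6 k] - asym3 c i j k = 0 := key i j k
  linarith

end slots

section expansion

variable (D : (Fin 6 → ℝ) →ₗ[ℝ] (Fin 6 → ℝ)) (ρ : AlternatingMap ℝ (Fin 6 → ℝ) ℝ (Fin 3))

lemma D_expand (X : Fin 6 → ℝ) : D X = ∑ b : Fin 6, X b • D (stdB6 b) := by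
  conv_lhs => rw [← basis_sum X]
  rw [map_sum]
  simp only [map_smul]

/-- `θ(D)ρ(eᵢ,eⱼ,e_k) = −eqn3 c d i j k` where `d a b = (D e_b)_a`. -/
lemma theta3_basis (c : Fin 6 → Fin 6 → Fin 6 → ℝ)
    (table : ∀ i j k : Fin 6, ρ ![stdB6 i, stdB6 j, stdB6 k] = asym3 c i j k)
    (i j k : Fin 6) :
    theta3 D ρ (stdB6 i) (stdB6 j) (stdB6 k) =
      -eqn3 c (fun a b => D (stdB6 b) a) i j k := by
  have t1 : ρ ![D (stdB6 i), stdB6 j, stdB6 k] = ∑ a : Fin 6, D (stdB6 i) a * asym3 c a j k := by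
    conv_lhs => rw [show D (stdB6 i) = ∑ a : Fin 6, D (stdB6 i) a • stdB6 a from
      (basis_sum _).symm]
    rw [slot0]
    exact Finset.sum_congr rfl fun a _ => by rw [table]; simp [smul_eq_mul]
  have t2 : ρ ![stdB6 i, D (stdB6 j), stdB6 k] = ∑ a : Fin 6, D (stdB6 j) a * asym3 c i a k := by
    conv_lhs => rw [show D (stdB6 j) = ∑ a : Fin 6, D (stdB6 j) a • stdB6 a from
      (basis_sum _).symm]
    rw [slot1]
    exact Finset.sum_congr rfl fun a _ => by rw [table]; simp [smul_eq_mul]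
  have t3 : ρ ![stdB6 i, stdB6 j, D (stdB6 k)] = ∑ a : Fin 6, D (stdB6 k) a * asym3 c i j a := by
    conv_lhs => rw [show D (stdB6 k) = ∑ a : Fin 6, D (stdB6 k) a • stdB6 a from
      (basis_sum _).symm]
    rw [slot2]
    exact Finset.sum_congr rfl fun a _ => by rw [table]; simp [smul_eq_mul]
  have expand : eqn3 c (fun a b => D (stdB6 b) a) i j k =
      (∑ a : Fin 6, D (stdB6 i) a * asym3 c a j k) +
      (∑ a : Fin 6, D (stdB6 j) a * asym3 c i a k) +
      (∑ a : Fin 6, D (stdB6 k) a * asym3 c i j a) := by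
    unfold eqn3
    rw [Finset.sum_add_distrib, Finset.sum_add_distrib]
  unfold theta3
  rw [t1, t2, t3, expand]
  ring

lemma theta3_linX (X Y Z : Fin 6 → ℝ) :
    theta3 D ρ X Y Z = ∑ b : Fin 6, X b * theta3 D ρ (stdB6 b) Y Z := by
  have e1 : ρ ![D X, Y, Z] = ∑ b : Fin 6, X b * ρ ![D (stdB6 b), Y, Z] := by
    conv_lhs => rw [D_expand D X]
    rw [slot0]; simp [smul_eq_mul]
  have e2 : ρ ![X, D Y, Z] = ∑ b : Fin 6, X b * ρ ![stdB6 b, D Y, Z] := by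
    conv_lhs => rw [show X = ∑ b : Fin 6, X b • stdB6 b from (basis_sum X).symm]
    rw [slot0]; simp [smul_eq_mul]
  have e3 : ρ ![X, Y, D Z] = ∑ b : Fin 6, X b * ρ ![stdB6 b, Y, D Z] := by
    conv_lhs => rw [show X = ∑ b : Fin 6, X b • stdB6 b from (basis_sum X).symm]
    rw [slot0]; simp [smul_eq_mul]
  unfold theta3
  rw [e1, e2, e3, ← Finset.sum_neg_distrib, ← Finset.sum_sub_distrib, ← Finset.sum_sub_distrib]
  exact Finset.sum_congr rfl fun b _ => by ring

lemma theta3_linY (X Y Z : Fin 6 → ℝ) :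
    theta3 D ρ X Y Z = ∑ b : Fin 6, Y b * theta3 D ρ X (stdB6 b) Z := by
  have e1 : ρ ![D X, Y, Z] = ∑ b : Fin 6, Y b * ρ ![D X, stdB6 b, Z] := by
    conv_lhs => rw [show Y = ∑ b : Fin 6, Y b • stdB6 b from (basis_sum Y).symm]
    rw [slot1]; simp [smul_eq_mul]
  have e2 : ρ ![X, D Y, Z] = ∑ b : Fin 6, Y b * ρ ![X, D (stdB6 b), Z] := by
    conv_lhs => rw [D_expand D Y]
    rw [slot1]; simp [smul_eq_mul]
  have e3 : ρ ![X, Y, D Z] = ∑ b : Fin 6, Y b * ρ ![X, stdB6 b, D Z] := by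
    conv_lhs => rw [show Y = ∑ b : Fin 6, Y b • stdB6 b from (basis_sum Y).symm]
    rw [slot1]; simp [smul_eq_mul]
  unfold theta3
  rw [e1, e2, e3, ← Finset.sum_neg_distrib, ← Finset.sum_sub_distrib, ← Finset.sum_sub_distrib]
  exact Finset.sum_congr rfl fun b _ => by ring

lemma theta3_linZ (X Y Z : Fin 6 → ℝ) :
    theta3 D ρ X Y Z = ∑ b : Fin 6, Z b * theta3 D ρ X Y (stdB6 b) := by
  have e1 : ρ ![D X, Y, Z] = ∑ b : Fin 6, Z b * ρ ![D X, Y, stdB6 b] := by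
    conv_lhs => rw [show Z = ∑ b : Fin 6, Z b • stdB6 b from (basis_sum Z).symm]
    rw [slot2]; simp [smul_eq_mul]
  have e2 : ρ ![X, D Y, Z] = ∑ b : Fin 6, Z b * ρ ![X, D Y, stdB6 b] := by
    conv_lhs => rw [show Z = ∑ b : Fin 6, Z b • stdB6 b from (basis_sum Z).symm]
    rw [slot2]; simp [smul_eq_mul]
  have e3 : ρ ![X, Y, D Z] = ∑ b : Fin 6, Z b * ρ ![X, Y, D (stdB6 b)] := by
    conv_lhs => rw [D_expand D Z]
    rw [slot2]; simp [smul_eq_mul]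
  unfold theta3
  rw [e1, e2, e3, ← Finset.sum_neg_distrib, ← Finset.sum_sub_distrib, ← Finset.sum_sub_distrib]
  exact Finset.sum_congr rfl fun b _ => by ring

/-- Key reduction: `θ(D)ρ = 0` iff the linear equations on increasing triples hold. -/
lemma theta3_iff_eqn3 (c : Fin 6 → Fin 6 → Fin 6 → ℝ)
    (hc : ∀ i j k : Fin 6, ¬(i < j ∧ j < k) → c i j k = 0)
    (h : ∀ i j k : Fin 6, i < j → j < k → ρ ![stdB6 i, stdB6 j, stdB6 k] = c i j k) :
    (∀ X Y Z : Fin 6 → ℝ, theta3 D ρ X Y Z = 0) ↔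
      (∀ i j k : Fin 6, i < j → j < k →
        eqn3 c (fun a b => D (stdB6 b) a) i j k = 0) := by
  have table := rho_val ρ c hc h
  constructor
  · intro H i j k _ _
    have := H (stdB6 i) (stdB6 j) (stdB6 k)
    rw [theta3_basis D ρ c table] at this
    linarith
  · intro H X Y Z
    have hall : ∀ i j k : Fin 6, eqn3 c (fun a b => D (stdB6 b) a) i j k = 0 :=
      skew_eq_zero _ (eqn3_swap01 c _) (eqn3_swap12 c _) H
    have hb : ∀ i j k : Fin 6, theta3 D ρ (stdB6 i) (stdB6 j) (stdB6 k) = 0 := by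
      intro i j k
      rw [theta3_basis D ρ c table, hall, neg_zero]
    rw [theta3_linX]
    refine Finset.sum_eq_zero fun b1 _ => ?_
    refine mul_eq_zero_of_right _ ?_
    rw [theta3_linY]
    refine Finset.sum_eq_zero fun b2 _ => ?_
    refine mul_eq_zero_of_right _ ?_
    rw [theta3_linZ]
    refine Finset.sum_eq_zero fun b3 _ => ?_
    exact mul_eq_zero_of_right _ (hb b1 b2 b3)

end expansion

lemma rhoPlusCoeff_zero : ∀ i j k : Fin 6, ¬(i < j ∧ j < k) → rhoPlusCoeff i j k = 0 := by
  intro i j k h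
  unfold rhoPlusCoeff
  split_ifs with h1 h2 h3 h4
  · simp only [Prod.mk.injEq] at h1; obtain ⟨rfl, rfl, rfl⟩ := h1
    exact absurd ⟨by decide, by decide⟩ h
  · simp only [Prod.mk.injEq] at h2; obtain ⟨rfl, rfl, rfl⟩ := h2
    exact absurd ⟨by decide, by decide⟩ h
  · simp only [Prod.mk.injEq] at h3; obtain ⟨rfl, rfl, rfl⟩ := h3
    exact absurd ⟨by decide, by decide⟩ h
  · simp only [Prod.mk.injEq] at h4; obtain ⟨rfl, rfl, rfl⟩ := h4
    exact absurd ⟨by decide, by decide⟩ h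
  · rfl

lemma rhoMinusCoeff_zero : ∀ i j k : Fin 6, ¬(i < j ∧ j < k) → rhoMinusCoeff i j k = 0 := by
  intro i j k h
  unfold rhoMinusCoeff
  split_ifs with h1 h2 h3 h4
  · simp only [Prod.mk.injEq] at h1; obtain ⟨rfl, rfl, rfl⟩ := h1
    exact absurd ⟨by decide, by decide⟩ h
  · simp only [Prod.mk.injEq] at h2; obtain ⟨rfl, rfl, rfl⟩ := h2
    exact absurd ⟨by decide, by decide⟩ h
  · simp only [Prod.mk.injEq] at h3; obtain ⟨rfl, rfl, rfl⟩ := h3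
    exact absurd ⟨by decide, by decide⟩ h
  · simp only [Prod.mk.injEq] at h4; obtain ⟨rfl, rfl, rfl⟩ := h4
    exact absurd ⟨by decide, by decide⟩ h
  · rfl


/-! ### Integer shadow for fast evaluation -/

def cPZ : Fin 6 → Fin 6 → Fin 6 → ℤ := fun i j k =>
  if (i, j, k) = ((0 : Fin 6), (2 : Fin 6), (4 : Fin 6)) then 1
  else if (i, j, k) = ((0 : Fin 6), (3 : Fin 6), (5 : Fin 6)) then -1
  else if (i, j, k) = ((1 : Fin 6), (2 : Fin 6), (5 : Fin 6)) then -1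
  else if (i, j, k) = ((1 : Fin 6), (3 : Fin 6), (4 : Fin 6)) then -1
  else 0

def cMZ : Fin 6 → Fin 6 → Fin 6 → ℤ := fun i j k =>
  if (i, j, k) = ((0 : Fin 6), (2 : Fin 6), (5 : Fin 6)) then 1
  else if (i, j, k) = ((0 : Fin 6), (3 : Fin 6), (4 : Fin 6)) then 1
  else if (i, j, k) = ((1 : Fin 6), (2 : Fin 6), (4 : Fin 6)) then 1
  else if (i, j, k) = ((1 : Fin 6), (3 : Fin 6), (5 : Fin 6)) then -1
  else 0

def asymZ (c : Fin 6 → Fin 6 → Fin 6 → ℤ) (i j k : Fin 6) : ℤ :=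
  c i j k - c j i k - c i k j - c k j i + c j k i + c k i j

lemma cP_cast (i j k : Fin 6) : rhoPlusCoeff i j k = ((cPZ i j k : ℤ) : ℝ) := by
  unfold rhoPlusCoeff cPZ
  split_ifs <;> norm_num

lemma cM_cast (i j k : Fin 6) : rhoMinusCoeff i j k = ((cMZ i j k : ℤ) : ℝ) := by
  unfold rhoMinusCoeff cMZ
  split_ifs <;> norm_num

lemma castP (i j k : Fin 6) : asym3 rhoPlusCoeff i j k = ((asymZ cPZ i j k : ℤ) : ℝ) := by
  unfold asym3 asymZ
  simp only [cP_cast]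
  push_cast
  ring

lemma castM (i j k : Fin 6) : asym3 rhoMinusCoeff i j k = ((asymZ cMZ i j k : ℤ) : ℝ) := by
  unfold asym3 asymZ
  simp only [cM_cast]
  push_cast
  ring

lemma eqn3_eval (c : Fin 6 → Fin 6 → Fin 6 → ℝ) (d : Fin 6 → Fin 6 → ℝ) (i j k : Fin 6) :
    eqn3 c d i j k =
      (d 0 i * asym3 c 0 j k + d 0 j * asym3 c i 0 k + d 0 k * asym3 c i j 0) +
      (d 1 i * asym3 c 1 j k + d 1 j * asym3 c i 1 k + d 1 k * asym3 c i j 1) +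
      (d 2 i * asym3 c 2 j k + d 2 j * asym3 c i 2 k + d 2 k * asym3 c i j 2) +
      (d 3 i * asym3 c 3 j k + d 3 j * asym3 c i 3 k + d 3 k * asym3 c i j 3) +
      (d 4 i * asym3 c 4 j k + d 4 j * asym3 c i 4 k + d 4 k * asym3 c i j 4) +
      (d 5 i * asym3 c 5 j k + d 5 j * asym3 c i 5 k + d 5 k * asym3 c i j 5) := by
  unfold eqn3
  rw [Fin.sum_univ_six]

lemma vP_0_0_2 : asym3 rhoPlusCoeff 0 0 2 = (0 : ℝ) := by
  rw [castP, show asymZ cPZ 0 0 2 = (0 : ℤ) from by decide]; norm_num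

lemma vP_0_0_3 : asym3 rhoPlusCoeff 0 0 3 = (0 : ℝ) := by
  rw [castP, show asymZ cPZ 0 0 3 = (0 : ℤ) from by decide]; norm_num

lemma vP_0_0_4 : asym3 rhoPlusCoeff 0 0 4 = (0 : ℝ) := by
  rw [castP, show asymZ cPZ 0 0 4 = (0 : ℤ) from by decide]; norm_num

lemma vP_0_0_5 : asym3 rhoPlusCoeff 0 0 5 = (0 : ℝ) := by
  rw [castP, show asymZ cPZ 0 0 5 = (0 : ℤ) from by decide]; norm_num

lemma vP_0_1_0 : asym3 rhoPlusCoeff 0 1 0 = (0 : ℝ) := by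
  rw [castP, show asymZ cPZ 0 1 0 = (0 : ℤ) from by decide]; norm_num

lemma vP_0_1_1 : asym3 rhoPlusCoeff 0 1 1 = (0 : ℝ) := by
  rw [castP, show asymZ cPZ 0 1 1 = (0 : ℤ) from by decide]; norm_num

lemma vP_0_1_2 : asym3 rhoPlusCoeff 0 1 2 = (0 : ℝ) := by
  rw [castP, show asymZ cPZ 0 1 2 = (0 : ℤ) from by decide]; norm_num

lemma vP_0_1_3 : asym3 rhoPlusCoeff 0 1 3 = (0 : ℝ) := by
  rw [castP, show asymZ cPZ 0 1 3 = (0 : ℤ) from by decide]; norm_num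

lemma vP_0_1_4 : asym3 rhoPlusCoeff 0 1 4 = (0 : ℝ) := by
  rw [castP, show asymZ cPZ 0 1 4 = (0 : ℤ) from by decide]; norm_num

lemma vP_0_1_5 : asym3 rhoPlusCoeff 0 1 5 = (0 : ℝ) := by
  rw [castP, show asymZ cPZ 0 1 5 = (0 : ℤ) from by decide]; norm_num

lemma vP_0_2_0 : asym3 rhoPlusCoeff 0 2 0 = (0 : ℝ) := by
  rw [castP, show asymZ cPZ 0 2 0 = (0 : ℤ) from by decide]; norm_num

lemma vP_0_2_1 : asym3 rhoPlusCoeff 0 2 1 = (0 : ℝ) := by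
  rw [castP, show asymZ cPZ 0 2 1 = (0 : ℤ) from by decide]; norm_num

lemma vP_0_2_2 : asym3 rhoPlusCoeff 0 2 2 = (0 : ℝ) := by
  rw [castP, show asymZ cPZ 0 2 2 = (0 : ℤ) from by decide]; norm_num

lemma vP_0_2_3 : asym3 rhoPlusCoeff 0 2 3 = (0 : ℝ) := by
  rw [castP, show asymZ cPZ 0 2 3 = (0 : ℤ) from by decide]; norm_num

lemma vP_0_2_4 : asym3 rhoPlusCoeff 0 2 4 = (1 : ℝ) := by
  rw [castP, show asymZ cPZ 0 2 4 = (1 : ℤ) from by decide]; norm_num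

lemma vP_0_2_5 : asym3 rhoPlusCoeff 0 2 5 = (0 : ℝ) := by
  rw [castP, show asymZ cPZ 0 2 5 = (0 : ℤ) from by decide]; norm_num

lemma vP_0_3_0 : asym3 rhoPlusCoeff 0 3 0 = (0 : ℝ) := by
  rw [castP, show asymZ cPZ 0 3 0 = (0 : ℤ) from by decide]; norm_num

lemma vP_0_3_1 : asym3 rhoPlusCoeff 0 3 1 = (0 : ℝ) := by
  rw [castP, show asymZ cPZ 0 3 1 = (0 : ℤ) from by decide]; norm_num

lemma vP_0_3_2 : asym3 rhoPlusCoeff 0 3 2 = (0 : ℝ) := by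
  rw [castP, show asymZ cPZ 0 3 2 = (0 : ℤ) from by decide]; norm_num

lemma vP_0_3_3 : asym3 rhoPlusCoeff 0 3 3 = (0 : ℝ) := by
  rw [castP, show asymZ cPZ 0 3 3 = (0 : ℤ) from by decide]; norm_num

lemma vP_0_3_4 : asym3 rhoPlusCoeff 0 3 4 = (0 : ℝ) := by
  rw [castP, show asymZ cPZ 0 3 4 = (0 : ℤ) from by decide]; norm_num

lemma vP_0_3_5 : asym3 rhoPlusCoeff 0 3 5 = (-1 : ℝ) := by
  rw [castP, show asymZ cPZ 0 3 5 = (-1 : ℤ) from by decide]; norm_num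

lemma vP_0_4_0 : asym3 rhoPlusCoeff 0 4 0 = (0 : ℝ) := by
  rw [castP, show asymZ cPZ 0 4 0 = (0 : ℤ) from by decide]; norm_num

lemma vP_0_4_1 : asym3 rhoPlusCoeff 0 4 1 = (0 : ℝ) := by
  rw [castP, show asymZ cPZ 0 4 1 = (0 : ℤ) from by decide]; norm_num

lemma vP_0_4_2 : asym3 rhoPlusCoeff 0 4 2 = (-1 : ℝ) := by
  rw [castP, show asymZ cPZ 0 4 2 = (-1 : ℤ) from by decide]; norm_num

lemma vP_0_4_3 : asym3 rhoPlusCoeff 0 4 3 = (0 : ℝ) := by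
  rw [castP, show asymZ cPZ 0 4 3 = (0 : ℤ) from by decide]; norm_num

lemma vP_0_4_4 : asym3 rhoPlusCoeff 0 4 4 = (0 : ℝ) := by
  rw [castP, show asymZ cPZ 0 4 4 = (0 : ℤ) from by decide]; norm_num

lemma vP_0_4_5 : asym3 rhoPlusCoeff 0 4 5 = (0 : ℝ) := by
  rw [castP, show asymZ cPZ 0 4 5 = (0 : ℤ) from by decide]; norm_num

lemma vP_0_5_2 : asym3 rhoPlusCoeff 0 5 2 = (0 : ℝ) := by
  rw [castP, show asymZ cPZ 0 5 2 = (0 : ℤ) from by decide]; norm_num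

lemma vP_0_5_3 : asym3 rhoPlusCoeff 0 5 3 = (1 : ℝ) := by
  rw [castP, show asymZ cPZ 0 5 3 = (1 : ℤ) from by decide]; norm_num

lemma vP_0_5_4 : asym3 rhoPlusCoeff 0 5 4 = (0 : ℝ) := by
  rw [castP, show asymZ cPZ 0 5 4 = (0 : ℤ) from by decide]; norm_num

lemma vP_0_5_5 : asym3 rhoPlusCoeff 0 5 5 = (0 : ℝ) := by
  rw [castP, show asymZ cPZ 0 5 5 = (0 : ℤ) from by decide]; norm_num

lemma vP_1_0_3 : asym3 rhoPlusCoeff 1 0 3 = (0 : ℝ) := by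
  rw [castP, show asymZ cPZ 1 0 3 = (0 : ℤ) from by decide]; norm_num

lemma vP_1_0_4 : asym3 rhoPlusCoeff 1 0 4 = (0 : ℝ) := by
  rw [castP, show asymZ cPZ 1 0 4 = (0 : ℤ) from by decide]; norm_num

lemma vP_1_0_5 : asym3 rhoPlusCoeff 1 0 5 = (0 : ℝ) := by
  rw [castP, show asymZ cPZ 1 0 5 = (0 : ℤ) from by decide]; norm_num

lemma vP_1_1_2 : asym3 rhoPlusCoeff 1 1 2 = (0 : ℝ) := by
  rw [castP, show asymZ cPZ 1 1 2 = (0 : ℤ) from by decide]; norm_num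

lemma vP_1_1_3 : asym3 rhoPlusCoeff 1 1 3 = (0 : ℝ) := by
  rw [castP, show asymZ cPZ 1 1 3 = (0 : ℤ) from by decide]; norm_num

lemma vP_1_1_4 : asym3 rhoPlusCoeff 1 1 4 = (0 : ℝ) := by
  rw [castP, show asymZ cPZ 1 1 4 = (0 : ℤ) from by decide]; norm_num

lemma vP_1_1_5 : asym3 rhoPlusCoeff 1 1 5 = (0 : ℝ) := by
  rw [castP, show asymZ cPZ 1 1 5 = (0 : ℤ) from by decide]; norm_num

lemma vP_1_2_0 : asym3 rhoPlusCoeff 1 2 0 = (0 : ℝ) := by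
  rw [castP, show asymZ cPZ 1 2 0 = (0 : ℤ) from by decide]; norm_num

lemma vP_1_2_1 : asym3 rhoPlusCoeff 1 2 1 = (0 : ℝ) := by
  rw [castP, show asymZ cPZ 1 2 1 = (0 : ℤ) from by decide]; norm_num

lemma vP_1_2_2 : asym3 rhoPlusCoeff 1 2 2 = (0 : ℝ) := by
  rw [castP, show asymZ cPZ 1 2 2 = (0 : ℤ) from by decide]; norm_num

lemma vP_1_2_3 : asym3 rhoPlusCoeff 1 2 3 = (0 : ℝ) := by
  rw [castP, show asymZ cPZ 1 2 3 = (0 : ℤ) from by decide]; norm_num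

lemma vP_1_2_4 : asym3 rhoPlusCoeff 1 2 4 = (0 : ℝ) := by
  rw [castP, show asymZ cPZ 1 2 4 = (0 : ℤ) from by decide]; norm_num

lemma vP_1_2_5 : asym3 rhoPlusCoeff 1 2 5 = (-1 : ℝ) := by
  rw [castP, show asymZ cPZ 1 2 5 = (-1 : ℤ) from by decide]; norm_num

lemma vP_1_3_0 : asym3 rhoPlusCoeff 1 3 0 = (0 : ℝ) := by
  rw [castP, show asymZ cPZ 1 3 0 = (0 : ℤ) from by decide]; norm_num

lemma vP_1_3_1 : asym3 rhoPlusCoeff 1 3 1 = (0 : ℝ) := by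
  rw [castP, show asymZ cPZ 1 3 1 = (0 : ℤ) from by decide]; norm_num

lemma vP_1_3_2 : asym3 rhoPlusCoeff 1 3 2 = (0 : ℝ) := by
  rw [castP, show asymZ cPZ 1 3 2 = (0 : ℤ) from by decide]; norm_num

lemma vP_1_3_3 : asym3 rhoPlusCoeff 1 3 3 = (0 : ℝ) := by
  rw [castP, show asymZ cPZ 1 3 3 = (0 : ℤ) from by decide]; norm_num

lemma vP_1_3_4 : asym3 rhoPlusCoeff 1 3 4 = (-1 : ℝ) := by
  rw [castP, show asymZ cPZ 1 3 4 = (-1 : ℤ) from by decide]; norm_num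

lemma vP_1_3_5 : asym3 rhoPlusCoeff 1 3 5 = (0 : ℝ) := by
  rw [castP, show asymZ cPZ 1 3 5 = (0 : ℤ) from by decide]; norm_num

lemma vP_1_4_0 : asym3 rhoPlusCoeff 1 4 0 = (0 : ℝ) := by
  rw [castP, show asymZ cPZ 1 4 0 = (0 : ℤ) from by decide]; norm_num

lemma vP_1_4_1 : asym3 rhoPlusCoeff 1 4 1 = (0 : ℝ) := by
  rw [castP, show asymZ cPZ 1 4 1 = (0 : ℤ) from by decide]; norm_num

lemma vP_1_4_2 : asym3 rhoPlusCoeff 1 4 2 = (0 : ℝ) := by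
  rw [castP, show asymZ cPZ 1 4 2 = (0 : ℤ) from by decide]; norm_num

lemma vP_1_4_3 : asym3 rhoPlusCoeff 1 4 3 = (1 : ℝ) := by
  rw [castP, show asymZ cPZ 1 4 3 = (1 : ℤ) from by decide]; norm_num

lemma vP_1_4_4 : asym3 rhoPlusCoeff 1 4 4 = (0 : ℝ) := by
  rw [castP, show asymZ cPZ 1 4 4 = (0 : ℤ) from by decide]; norm_num

lemma vP_1_4_5 : asym3 rhoPlusCoeff 1 4 5 = (0 : ℝ) := by
  rw [castP, show asymZ cPZ 1 4 5 = (0 : ℤ) from by decide]; norm_num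

lemma vP_1_5_3 : asym3 rhoPlusCoeff 1 5 3 = (0 : ℝ) := by
  rw [castP, show asymZ cPZ 1 5 3 = (0 : ℤ) from by decide]; norm_num

lemma vP_1_5_4 : asym3 rhoPlusCoeff 1 5 4 = (0 : ℝ) := by
  rw [castP, show asymZ cPZ 1 5 4 = (0 : ℤ) from by decide]; norm_num

lemma vP_1_5_5 : asym3 rhoPlusCoeff 1 5 5 = (0 : ℝ) := by
  rw [castP, show asymZ cPZ 1 5 5 = (0 : ℤ) from by decide]; norm_num

lemma vP_2_0_4 : asym3 rhoPlusCoeff 2 0 4 = (-1 : ℝ) := by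
  rw [castP, show asymZ cPZ 2 0 4 = (-1 : ℤ) from by decide]; norm_num

lemma vP_2_0_5 : asym3 rhoPlusCoeff 2 0 5 = (0 : ℝ) := by
  rw [castP, show asymZ cPZ 2 0 5 = (0 : ℤ) from by decide]; norm_num

lemma vP_2_1_2 : asym3 rhoPlusCoeff 2 1 2 = (0 : ℝ) := by
  rw [castP, show asymZ cPZ 2 1 2 = (0 : ℤ) from by decide]; norm_num

lemma vP_2_1_3 : asym3 rhoPlusCoeff 2 1 3 = (0 : ℝ) := by
  rw [castP, show asymZ cPZ 2 1 3 = (0 : ℤ) from by decide]; norm_num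

lemma vP_2_1_4 : asym3 rhoPlusCoeff 2 1 4 = (0 : ℝ) := by
  rw [castP, show asymZ cPZ 2 1 4 = (0 : ℤ) from by decide]; norm_num

lemma vP_2_1_5 : asym3 rhoPlusCoeff 2 1 5 = (1 : ℝ) := by
  rw [castP, show asymZ cPZ 2 1 5 = (1 : ℤ) from by decide]; norm_num

lemma vP_2_2_3 : asym3 rhoPlusCoeff 2 2 3 = (0 : ℝ) := by
  rw [castP, show asymZ cPZ 2 2 3 = (0 : ℤ) from by decide]; norm_num

lemma vP_2_2_4 : asym3 rhoPlusCoeff 2 2 4 = (0 : ℝ) := by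
  rw [castP, show asymZ cPZ 2 2 4 = (0 : ℤ) from by decide]; norm_num

lemma vP_2_2_5 : asym3 rhoPlusCoeff 2 2 5 = (0 : ℝ) := by
  rw [castP, show asymZ cPZ 2 2 5 = (0 : ℤ) from by decide]; norm_num

lemma vP_2_3_0 : asym3 rhoPlusCoeff 2 3 0 = (0 : ℝ) := by
  rw [castP, show asymZ cPZ 2 3 0 = (0 : ℤ) from by decide]; norm_num

lemma vP_2_3_1 : asym3 rhoPlusCoeff 2 3 1 = (0 : ℝ) := by
  rw [castP, show asymZ cPZ 2 3 1 = (0 : ℤ) from by decide]; norm_num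

lemma vP_2_3_2 : asym3 rhoPlusCoeff 2 3 2 = (0 : ℝ) := by
  rw [castP, show asymZ cPZ 2 3 2 = (0 : ℤ) from by decide]; norm_num

lemma vP_2_3_3 : asym3 rhoPlusCoeff 2 3 3 = (0 : ℝ) := by
  rw [castP, show asymZ cPZ 2 3 3 = (0 : ℤ) from by decide]; norm_num

lemma vP_2_3_4 : asym3 rhoPlusCoeff 2 3 4 = (0 : ℝ) := by
  rw [castP, show asymZ cPZ 2 3 4 = (0 : ℤ) from by decide]; norm_num

lemma vP_2_3_5 : asym3 rhoPlusCoeff 2 3 5 = (0 : ℝ) := by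
  rw [castP, show asymZ cPZ 2 3 5 = (0 : ℤ) from by decide]; norm_num

lemma vP_2_4_0 : asym3 rhoPlusCoeff 2 4 0 = (1 : ℝ) := by
  rw [castP, show asymZ cPZ 2 4 0 = (1 : ℤ) from by decide]; norm_num

lemma vP_2_4_1 : asym3 rhoPlusCoeff 2 4 1 = (0 : ℝ) := by
  rw [castP, show asymZ cPZ 2 4 1 = (0 : ℤ) from by decide]; norm_num

lemma vP_2_4_2 : asym3 rhoPlusCoeff 2 4 2 = (0 : ℝ) := by
  rw [castP, show asymZ cPZ 2 4 2 = (0 : ℤ) from by decide]; norm_num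

lemma vP_2_4_3 : asym3 rhoPlusCoeff 2 4 3 = (0 : ℝ) := by
  rw [castP, show asymZ cPZ 2 4 3 = (0 : ℤ) from by decide]; norm_num

lemma vP_2_4_4 : asym3 rhoPlusCoeff 2 4 4 = (0 : ℝ) := by
  rw [castP, show asymZ cPZ 2 4 4 = (0 : ℤ) from by decide]; norm_num

lemma vP_2_4_5 : asym3 rhoPlusCoeff 2 4 5 = (0 : ℝ) := by
  rw [castP, show asymZ cPZ 2 4 5 = (0 : ℤ) from by decide]; norm_num

lemma vP_2_5_4 : asym3 rhoPlusCoeff 2 5 4 = (0 : ℝ) := by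
  rw [castP, show asymZ cPZ 2 5 4 = (0 : ℤ) from by decide]; norm_num

lemma vP_2_5_5 : asym3 rhoPlusCoeff 2 5 5 = (0 : ℝ) := by
  rw [castP, show asymZ cPZ 2 5 5 = (0 : ℤ) from by decide]; norm_num

lemma vP_3_0_5 : asym3 rhoPlusCoeff 3 0 5 = (1 : ℝ) := by
  rw [castP, show asymZ cPZ 3 0 5 = (1 : ℤ) from by decide]; norm_num

lemma vP_3_1_2 : asym3 rhoPlusCoeff 3 1 2 = (0 : ℝ) := by
  rw [castP, show asymZ cPZ 3 1 2 = (0 : ℤ) from by decide]; norm_num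

lemma vP_3_1_3 : asym3 rhoPlusCoeff 3 1 3 = (0 : ℝ) := by
  rw [castP, show asymZ cPZ 3 1 3 = (0 : ℤ) from by decide]; norm_num

lemma vP_3_1_4 : asym3 rhoPlusCoeff 3 1 4 = (1 : ℝ) := by
  rw [castP, show asymZ cPZ 3 1 4 = (1 : ℤ) from by decide]; norm_num

lemma vP_3_1_5 : asym3 rhoPlusCoeff 3 1 5 = (0 : ℝ) := by
  rw [castP, show asymZ cPZ 3 1 5 = (0 : ℤ) from by decide]; norm_num

lemma vP_3_2_3 : asym3 rhoPlusCoeff 3 2 3 = (0 : ℝ) := by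
  rw [castP, show asymZ cPZ 3 2 3 = (0 : ℤ) from by decide]; norm_num

lemma vP_3_2_4 : asym3 rhoPlusCoeff 3 2 4 = (0 : ℝ) := by
  rw [castP, show asymZ cPZ 3 2 4 = (0 : ℤ) from by decide]; norm_num

lemma vP_3_2_5 : asym3 rhoPlusCoeff 3 2 5 = (0 : ℝ) := by
  rw [castP, show asymZ cPZ 3 2 5 = (0 : ℤ) from by decide]; norm_num

lemma vP_3_3_4 : asym3 rhoPlusCoeff 3 3 4 = (0 : ℝ) := by
  rw [castP, show asymZ cPZ 3 3 4 = (0 : ℤ) from by decide]; norm_num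

lemma vP_3_3_5 : asym3 rhoPlusCoeff 3 3 5 = (0 : ℝ) := by
  rw [castP, show asymZ cPZ 3 3 5 = (0 : ℤ) from by decide]; norm_num

lemma vP_3_4_0 : asym3 rhoPlusCoeff 3 4 0 = (0 : ℝ) := by
  rw [castP, show asymZ cPZ 3 4 0 = (0 : ℤ) from by decide]; norm_num

lemma vP_3_4_1 : asym3 rhoPlusCoeff 3 4 1 = (-1 : ℝ) := by
  rw [castP, show asymZ cPZ 3 4 1 = (-1 : ℤ) from by decide]; norm_num

lemma vP_3_4_2 : asym3 rhoPlusCoeff 3 4 2 = (0 : ℝ) := by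
  rw [castP, show asymZ cPZ 3 4 2 = (0 : ℤ) from by decide]; norm_num

lemma vP_3_4_3 : asym3 rhoPlusCoeff 3 4 3 = (0 : ℝ) := by
  rw [castP, show asymZ cPZ 3 4 3 = (0 : ℤ) from by decide]; norm_num

lemma vP_3_4_4 : asym3 rhoPlusCoeff 3 4 4 = (0 : ℝ) := by
  rw [castP, show asymZ cPZ 3 4 4 = (0 : ℤ) from by decide]; norm_num

lemma vP_3_4_5 : asym3 rhoPlusCoeff 3 4 5 = (0 : ℝ) := by
  rw [castP, show asymZ cPZ 3 4 5 = (0 : ℤ) from by decide]; norm_num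

lemma vP_3_5_5 : asym3 rhoPlusCoeff 3 5 5 = (0 : ℝ) := by
  rw [castP, show asymZ cPZ 3 5 5 = (0 : ℤ) from by decide]; norm_num

lemma vP_4_1_2 : asym3 rhoPlusCoeff 4 1 2 = (0 : ℝ) := by
  rw [castP, show asymZ cPZ 4 1 2 = (0 : ℤ) from by decide]; norm_num

lemma vP_4_1_3 : asym3 rhoPlusCoeff 4 1 3 = (-1 : ℝ) := by
  rw [castP, show asymZ cPZ 4 1 3 = (-1 : ℤ) from by decide]; norm_num

lemma vP_4_1_4 : asym3 rhoPlusCoeff 4 1 4 = (0 : ℝ) := by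
  rw [castP, show asymZ cPZ 4 1 4 = (0 : ℤ) from by decide]; norm_num

lemma vP_4_1_5 : asym3 rhoPlusCoeff 4 1 5 = (0 : ℝ) := by
  rw [castP, show asymZ cPZ 4 1 5 = (0 : ℤ) from by decide]; norm_num

lemma vP_4_2_3 : asym3 rhoPlusCoeff 4 2 3 = (0 : ℝ) := by
  rw [castP, show asymZ cPZ 4 2 3 = (0 : ℤ) from by decide]; norm_num

lemma vP_4_2_4 : asym3 rhoPlusCoeff 4 2 4 = (0 : ℝ) := by
  rw [castP, show asymZ cPZ 4 2 4 = (0 : ℤ) from by decide]; norm_num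

lemma vP_4_2_5 : asym3 rhoPlusCoeff 4 2 5 = (0 : ℝ) := by
  rw [castP, show asymZ cPZ 4 2 5 = (0 : ℤ) from by decide]; norm_num

lemma vP_4_3_4 : asym3 rhoPlusCoeff 4 3 4 = (0 : ℝ) := by
  rw [castP, show asymZ cPZ 4 3 4 = (0 : ℤ) from by decide]; norm_num

lemma vP_4_3_5 : asym3 rhoPlusCoeff 4 3 5 = (0 : ℝ) := by
  rw [castP, show asymZ cPZ 4 3 5 = (0 : ℤ) from by decide]; norm_num

lemma vP_4_4_5 : asym3 rhoPlusCoeff 4 4 5 = (0 : ℝ) := by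
  rw [castP, show asymZ cPZ 4 4 5 = (0 : ℤ) from by decide]; norm_num

lemma vP_5_1_2 : asym3 rhoPlusCoeff 5 1 2 = (-1 : ℝ) := by
  rw [castP, show asymZ cPZ 5 1 2 = (-1 : ℤ) from by decide]; norm_num

lemma vP_5_1_3 : asym3 rhoPlusCoeff 5 1 3 = (0 : ℝ) := by
  rw [castP, show asymZ cPZ 5 1 3 = (0 : ℤ) from by decide]; norm_num

lemma vP_5_1_4 : asym3 rhoPlusCoeff 5 1 4 = (0 : ℝ) := by
  rw [castP, show asymZ cPZ 5 1 4 = (0 : ℤ) from by decide]; norm_num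

lemma vP_5_1_5 : asym3 rhoPlusCoeff 5 1 5 = (0 : ℝ) := by
  rw [castP, show asymZ cPZ 5 1 5 = (0 : ℤ) from by decide]; norm_num

lemma vP_5_2_3 : asym3 rhoPlusCoeff 5 2 3 = (0 : ℝ) := by
  rw [castP, show asymZ cPZ 5 2 3 = (0 : ℤ) from by decide]; norm_num

lemma vP_5_2_4 : asym3 rhoPlusCoeff 5 2 4 = (0 : ℝ) := by
  rw [castP, show asymZ cPZ 5 2 4 = (0 : ℤ) from by decide]; norm_num

lemma vP_5_2_5 : asym3 rhoPlusCoeff 5 2 5 = (0 : ℝ) := by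
  rw [castP, show asymZ cPZ 5 2 5 = (0 : ℤ) from by decide]; norm_num

lemma vP_5_3_4 : asym3 rhoPlusCoeff 5 3 4 = (0 : ℝ) := by
  rw [castP, show asymZ cPZ 5 3 4 = (0 : ℤ) from by decide]; norm_num

lemma vP_5_3_5 : asym3 rhoPlusCoeff 5 3 5 = (0 : ℝ) := by
  rw [castP, show asymZ cPZ 5 3 5 = (0 : ℤ) from by decide]; norm_num

lemma vP_5_4_5 : asym3 rhoPlusCoeff 5 4 5 = (0 : ℝ) := by
  rw [castP, show asymZ cPZ 5 4 5 = (0 : ℤ) from by decide]; norm_num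

lemma vM_0_0_2 : asym3 rhoMinusCoeff 0 0 2 = (0 : ℝ) := by
  rw [castM, show asymZ cMZ 0 0 2 = (0 : ℤ) from by decide]; norm_num

lemma vM_0_0_3 : asym3 rhoMinusCoeff 0 0 3 = (0 : ℝ) := by
  rw [castM, show asymZ cMZ 0 0 3 = (0 : ℤ) from by decide]; norm_num

lemma vM_0_0_4 : asym3 rhoMinusCoeff 0 0 4 = (0 : ℝ) := by
  rw [castM, show asymZ cMZ 0 0 4 = (0 : ℤ) from by decide]; norm_num

lemma vM_0_0_5 : asym3 rhoMinusCoeff 0 0 5 = (0 : ℝ) := by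
  rw [castM, show asymZ cMZ 0 0 5 = (0 : ℤ) from by decide]; norm_num

lemma vM_0_1_0 : asym3 rhoMinusCoeff 0 1 0 = (0 : ℝ) := by
  rw [castM, show asymZ cMZ 0 1 0 = (0 : ℤ) from by decide]; norm_num

lemma vM_0_1_1 : asym3 rhoMinusCoeff 0 1 1 = (0 : ℝ) := by
  rw [castM, show asymZ cMZ 0 1 1 = (0 : ℤ) from by decide]; norm_num

lemma vM_0_1_2 : asym3 rhoMinusCoeff 0 1 2 = (0 : ℝ) := by
  rw [castM, show asymZ cMZ 0 1 2 = (0 : ℤ) from by decide]; norm_num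

lemma vM_0_1_3 : asym3 rhoMinusCoeff 0 1 3 = (0 : ℝ) := by
  rw [castM, show asymZ cMZ 0 1 3 = (0 : ℤ) from by decide]; norm_num

lemma vM_0_1_4 : asym3 rhoMinusCoeff 0 1 4 = (0 : ℝ) := by
  rw [castM, show asymZ cMZ 0 1 4 = (0 : ℤ) from by decide]; norm_num

lemma vM_0_1_5 : asym3 rhoMinusCoeff 0 1 5 = (0 : ℝ) := by
  rw [castM, show asymZ cMZ 0 1 5 = (0 : ℤ) from by decide]; norm_num

lemma vM_0_2_0 : asym3 rhoMinusCoeff 0 2 0 = (0 : ℝ) := by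
  rw [castM, show asymZ cMZ 0 2 0 = (0 : ℤ) from by decide]; norm_num

lemma vM_0_2_1 : asym3 rhoMinusCoeff 0 2 1 = (0 : ℝ) := by
  rw [castM, show asymZ cMZ 0 2 1 = (0 : ℤ) from by decide]; norm_num

lemma vM_0_2_2 : asym3 rhoMinusCoeff 0 2 2 = (0 : ℝ) := by
  rw [castM, show asymZ cMZ 0 2 2 = (0 : ℤ) from by decide]; norm_num

lemma vM_0_2_3 : asym3 rhoMinusCoeff 0 2 3 = (0 : ℝ) := by
  rw [castM, show asymZ cMZ 0 2 3 = (0 : ℤ) from by decide]; norm_num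

lemma vM_0_2_4 : asym3 rhoMinusCoeff 0 2 4 = (0 : ℝ) := by
  rw [castM, show asymZ cMZ 0 2 4 = (0 : ℤ) from by decide]; norm_num

lemma vM_0_2_5 : asym3 rhoMinusCoeff 0 2 5 = (1 : ℝ) := by
  rw [castM, show asymZ cMZ 0 2 5 = (1 : ℤ) from by decide]; norm_num

lemma vM_0_3_0 : asym3 rhoMinusCoeff 0 3 0 = (0 : ℝ) := by
  rw [castM, show asymZ cMZ 0 3 0 = (0 : ℤ) from by decide]; norm_num

lemma vM_0_3_1 : asym3 rhoMinusCoeff 0 3 1 = (0 : ℝ) := by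
  rw [castM, show asymZ cMZ 0 3 1 = (0 : ℤ) from by decide]; norm_num

lemma vM_0_3_2 : asym3 rhoMinusCoeff 0 3 2 = (0 : ℝ) := by
  rw [castM, show asymZ cMZ 0 3 2 = (0 : ℤ) from by decide]; norm_num

lemma vM_0_3_3 : asym3 rhoMinusCoeff 0 3 3 = (0 : ℝ) := by
  rw [castM, show asymZ cMZ 0 3 3 = (0 : ℤ) from by decide]; norm_num

lemma vM_0_3_4 : asym3 rhoMinusCoeff 0 3 4 = (1 : ℝ) := by
  rw [castM, show asymZ cMZ 0 3 4 = (1 : ℤ) from by decide]; norm_num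

lemma vM_0_3_5 : asym3 rhoMinusCoeff 0 3 5 = (0 : ℝ) := by
  rw [castM, show asymZ cMZ 0 3 5 = (0 : ℤ) from by decide]; norm_num

lemma vM_0_4_0 : asym3 rhoMinusCoeff 0 4 0 = (0 : ℝ) := by
  rw [castM, show asymZ cMZ 0 4 0 = (0 : ℤ) from by decide]; norm_num

lemma vM_0_4_1 : asym3 rhoMinusCoeff 0 4 1 = (0 : ℝ) := by
  rw [castM, show asymZ cMZ 0 4 1 = (0 : ℤ) from by decide]; norm_num

lemma vM_0_4_2 : asym3 rhoMinusCoeff 0 4 2 = (0 : ℝ) := by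
  rw [castM, show asymZ cMZ 0 4 2 = (0 : ℤ) from by decide]; norm_num

lemma vM_0_4_3 : asym3 rhoMinusCoeff 0 4 3 = (-1 : ℝ) := by
  rw [castM, show asymZ cMZ 0 4 3 = (-1 : ℤ) from by decide]; norm_num

lemma vM_0_4_4 : asym3 rhoMinusCoeff 0 4 4 = (0 : ℝ) := by
  rw [castM, show asymZ cMZ 0 4 4 = (0 : ℤ) from by decide]; norm_num

lemma vM_0_4_5 : asym3 rhoMinusCoeff 0 4 5 = (0 : ℝ) := by
  rw [castM, show asymZ cMZ 0 4 5 = (0 : ℤ) from by decide]; norm_num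

lemma vM_0_5_2 : asym3 rhoMinusCoeff 0 5 2 = (-1 : ℝ) := by
  rw [castM, show asymZ cMZ 0 5 2 = (-1 : ℤ) from by decide]; norm_num

lemma vM_0_5_3 : asym3 rhoMinusCoeff 0 5 3 = (0 : ℝ) := by
  rw [castM, show asymZ cMZ 0 5 3 = (0 : ℤ) from by decide]; norm_num

lemma vM_0_5_4 : asym3 rhoMinusCoeff 0 5 4 = (0 : ℝ) := by
  rw [castM, show asymZ cMZ 0 5 4 = (0 : ℤ) from by decide]; norm_num

lemma vM_0_5_5 : asym3 rhoMinusCoeff 0 5 5 = (0 : ℝ) := by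
  rw [castM, show asymZ cMZ 0 5 5 = (0 : ℤ) from by decide]; norm_num

lemma vM_1_0_3 : asym3 rhoMinusCoeff 1 0 3 = (0 : ℝ) := by
  rw [castM, show asymZ cMZ 1 0 3 = (0 : ℤ) from by decide]; norm_num

lemma vM_1_0_4 : asym3 rhoMinusCoeff 1 0 4 = (0 : ℝ) := by
  rw [castM, show asymZ cMZ 1 0 4 = (0 : ℤ) from by decide]; norm_num

lemma vM_1_0_5 : asym3 rhoMinusCoeff 1 0 5 = (0 : ℝ) := by
  rw [castM, show asymZ cMZ 1 0 5 = (0 : ℤ) from by decide]; norm_num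

lemma vM_1_1_2 : asym3 rhoMinusCoeff 1 1 2 = (0 : ℝ) := by
  rw [castM, show asymZ cMZ 1 1 2 = (0 : ℤ) from by decide]; norm_num

lemma vM_1_1_3 : asym3 rhoMinusCoeff 1 1 3 = (0 : ℝ) := by
  rw [castM, show asymZ cMZ 1 1 3 = (0 : ℤ) from by decide]; norm_num

lemma vM_1_1_4 : asym3 rhoMinusCoeff 1 1 4 = (0 : ℝ) := by
  rw [castM, show asymZ cMZ 1 1 4 = (0 : ℤ) from by decide]; norm_num

lemma vM_1_1_5 : asym3 rhoMinusCoeff 1 1 5 = (0 : ℝ) := by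
  rw [castM, show asymZ cMZ 1 1 5 = (0 : ℤ) from by decide]; norm_num

lemma vM_1_2_0 : asym3 rhoMinusCoeff 1 2 0 = (0 : ℝ) := by
  rw [castM, show asymZ cMZ 1 2 0 = (0 : ℤ) from by decide]; norm_num

lemma vM_1_2_1 : asym3 rhoMinusCoeff 1 2 1 = (0 : ℝ) := by
  rw [castM, show asymZ cMZ 1 2 1 = (0 : ℤ) from by decide]; norm_num

lemma vM_1_2_2 : asym3 rhoMinusCoeff 1 2 2 = (0 : ℝ) := by
  rw [castM, show asymZ cMZ 1 2 2 = (0 : ℤ) from by decide]; norm_num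

lemma vM_1_2_3 : asym3 rhoMinusCoeff 1 2 3 = (0 : ℝ) := by
  rw [castM, show asymZ cMZ 1 2 3 = (0 : ℤ) from by decide]; norm_num

lemma vM_1_2_4 : asym3 rhoMinusCoeff 1 2 4 = (1 : ℝ) := by
  rw [castM, show asymZ cMZ 1 2 4 = (1 : ℤ) from by decide]; norm_num

lemma vM_1_2_5 : asym3 rhoMinusCoeff 1 2 5 = (0 : ℝ) := by
  rw [castM, show asymZ cMZ 1 2 5 = (0 : ℤ) from by decide]; norm_num

lemma vM_1_3_0 : asym3 rhoMinusCoeff 1 3 0 = (0 : ℝ) := by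
  rw [castM, show asymZ cMZ 1 3 0 = (0 : ℤ) from by decide]; norm_num

lemma vM_1_3_1 : asym3 rhoMinusCoeff 1 3 1 = (0 : ℝ) := by
  rw [castM, show asymZ cMZ 1 3 1 = (0 : ℤ) from by decide]; norm_num

lemma vM_1_3_2 : asym3 rhoMinusCoeff 1 3 2 = (0 : ℝ) := by
  rw [castM, show asymZ cMZ 1 3 2 = (0 : ℤ) from by decide]; norm_num

lemma vM_1_3_3 : asym3 rhoMinusCoeff 1 3 3 = (0 : ℝ) := by
  rw [castM, show asymZ cMZ 1 3 3 = (0 : ℤ) from by decide]; norm_num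

lemma vM_1_3_4 : asym3 rhoMinusCoeff 1 3 4 = (0 : ℝ) := by
  rw [castM, show asymZ cMZ 1 3 4 = (0 : ℤ) from by decide]; norm_num

lemma vM_1_3_5 : asym3 rhoMinusCoeff 1 3 5 = (-1 : ℝ) := by
  rw [castM, show asymZ cMZ 1 3 5 = (-1 : ℤ) from by decide]; norm_num

lemma vM_1_4_0 : asym3 rhoMinusCoeff 1 4 0 = (0 : ℝ) := by
  rw [castM, show asymZ cMZ 1 4 0 = (0 : ℤ) from by decide]; norm_num

lemma vM_1_4_1 : asym3 rhoMinusCoeff 1 4 1 = (0 : ℝ) := by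
  rw [castM, show asymZ cMZ 1 4 1 = (0 : ℤ) from by decide]; norm_num

lemma vM_1_4_2 : asym3 rhoMinusCoeff 1 4 2 = (-1 : ℝ) := by
  rw [castM, show asymZ cMZ 1 4 2 = (-1 : ℤ) from by decide]; norm_num

lemma vM_1_4_3 : asym3 rhoMinusCoeff 1 4 3 = (0 : ℝ) := by
  rw [castM, show asymZ cMZ 1 4 3 = (0 : ℤ) from by decide]; norm_num

lemma vM_1_4_4 : asym3 rhoMinusCoeff 1 4 4 = (0 : ℝ) := by
  rw [castM, show asymZ cMZ 1 4 4 = (0 : ℤ) from by decide]; norm_num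

lemma vM_1_4_5 : asym3 rhoMinusCoeff 1 4 5 = (0 : ℝ) := by
  rw [castM, show asymZ cMZ 1 4 5 = (0 : ℤ) from by decide]; norm_num

lemma vM_1_5_3 : asym3 rhoMinusCoeff 1 5 3 = (1 : ℝ) := by
  rw [castM, show asymZ cMZ 1 5 3 = (1 : ℤ) from by decide]; norm_num

lemma vM_1_5_4 : asym3 rhoMinusCoeff 1 5 4 = (0 : ℝ) := by
  rw [castM, show asymZ cMZ 1 5 4 = (0 : ℤ) from by decide]; norm_num

lemma vM_1_5_5 : asym3 rhoMinusCoeff 1 5 5 = (0 : ℝ) := by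
  rw [castM, show asymZ cMZ 1 5 5 = (0 : ℤ) from by decide]; norm_num

lemma vM_2_0_4 : asym3 rhoMinusCoeff 2 0 4 = (0 : ℝ) := by
  rw [castM, show asymZ cMZ 2 0 4 = (0 : ℤ) from by decide]; norm_num

lemma vM_2_0_5 : asym3 rhoMinusCoeff 2 0 5 = (-1 : ℝ) := by
  rw [castM, show asymZ cMZ 2 0 5 = (-1 : ℤ) from by decide]; norm_num

lemma vM_2_1_2 : asym3 rhoMinusCoeff 2 1 2 = (0 : ℝ) := by
  rw [castM, show asymZ cMZ 2 1 2 = (0 : ℤ) from by decide]; norm_num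

lemma vM_2_1_3 : asym3 rhoMinusCoeff 2 1 3 = (0 : ℝ) := by
  rw [castM, show asymZ cMZ 2 1 3 = (0 : ℤ) from by decide]; norm_num

lemma vM_2_1_4 : asym3 rhoMinusCoeff 2 1 4 = (-1 : ℝ) := by
  rw [castM, show asymZ cMZ 2 1 4 = (-1 : ℤ) from by decide]; norm_num

lemma vM_2_1_5 : asym3 rhoMinusCoeff 2 1 5 = (0 : ℝ) := by
  rw [castM, show asymZ cMZ 2 1 5 = (0 : ℤ) from by decide]; norm_num

lemma vM_2_2_3 : asym3 rhoMinusCoeff 2 2 3 = (0 : ℝ) := by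
  rw [castM, show asymZ cMZ 2 2 3 = (0 : ℤ) from by decide]; norm_num

lemma vM_2_2_4 : asym3 rhoMinusCoeff 2 2 4 = (0 : ℝ) := by
  rw [castM, show asymZ cMZ 2 2 4 = (0 : ℤ) from by decide]; norm_num

lemma vM_2_2_5 : asym3 rhoMinusCoeff 2 2 5 = (0 : ℝ) := by
  rw [castM, show asymZ cMZ 2 2 5 = (0 : ℤ) from by decide]; norm_num

lemma vM_2_3_0 : asym3 rhoMinusCoeff 2 3 0 = (0 : ℝ) := by
  rw [castM, show asymZ cMZ 2 3 0 = (0 : ℤ) from by decide]; norm_num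

lemma vM_2_3_1 : asym3 rhoMinusCoeff 2 3 1 = (0 : ℝ) := by
  rw [castM, show asymZ cMZ 2 3 1 = (0 : ℤ) from by decide]; norm_num

lemma vM_2_3_2 : asym3 rhoMinusCoeff 2 3 2 = (0 : ℝ) := by
  rw [castM, show asymZ cMZ 2 3 2 = (0 : ℤ) from by decide]; norm_num

lemma vM_2_3_3 : asym3 rhoMinusCoeff 2 3 3 = (0 : ℝ) := by
  rw [castM, show asymZ cMZ 2 3 3 = (0 : ℤ) from by decide]; norm_num

lemma vM_2_3_4 : asym3 rhoMinusCoeff 2 3 4 = (0 : ℝ) := by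
  rw [castM, show asymZ cMZ 2 3 4 = (0 : ℤ) from by decide]; norm_num

lemma vM_2_3_5 : asym3 rhoMinusCoeff 2 3 5 = (0 : ℝ) := by
  rw [castM, show asymZ cMZ 2 3 5 = (0 : ℤ) from by decide]; norm_num

lemma vM_2_4_0 : asym3 rhoMinusCoeff 2 4 0 = (0 : ℝ) := by
  rw [castM, show asymZ cMZ 2 4 0 = (0 : ℤ) from by decide]; norm_num

lemma vM_2_4_1 : asym3 rhoMinusCoeff 2 4 1 = (1 : ℝ) := by
  rw [castM, show asymZ cMZ 2 4 1 = (1 : ℤ) from by decide]; norm_num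

lemma vM_2_4_2 : asym3 rhoMinusCoeff 2 4 2 = (0 : ℝ) := by
  rw [castM, show asymZ cMZ 2 4 2 = (0 : ℤ) from by decide]; norm_num

lemma vM_2_4_3 : asym3 rhoMinusCoeff 2 4 3 = (0 : ℝ) := by
  rw [castM, show asymZ cMZ 2 4 3 = (0 : ℤ) from by decide]; norm_num

lemma vM_2_4_4 : asym3 rhoMinusCoeff 2 4 4 = (0 : ℝ) := by
  rw [castM, show asymZ cMZ 2 4 4 = (0 : ℤ) from by decide]; norm_num

lemma vM_2_4_5 : asym3 rhoMinusCoeff 2 4 5 = (0 : ℝ) := by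
  rw [castM, show asymZ cMZ 2 4 5 = (0 : ℤ) from by decide]; norm_num

lemma vM_2_5_4 : asym3 rhoMinusCoeff 2 5 4 = (0 : ℝ) := by
  rw [castM, show asymZ cMZ 2 5 4 = (0 : ℤ) from by decide]; norm_num

lemma vM_2_5_5 : asym3 rhoMinusCoeff 2 5 5 = (0 : ℝ) := by
  rw [castM, show asymZ cMZ 2 5 5 = (0 : ℤ) from by decide]; norm_num

lemma vM_3_0_5 : asym3 rhoMinusCoeff 3 0 5 = (0 : ℝ) := by
  rw [castM, show asymZ cMZ 3 0 5 = (0 : ℤ) from by decide]; norm_num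

lemma vM_3_1_2 : asym3 rhoMinusCoeff 3 1 2 = (0 : ℝ) := by
  rw [castM, show asymZ cMZ 3 1 2 = (0 : ℤ) from by decide]; norm_num

lemma vM_3_1_3 : asym3 rhoMinusCoeff 3 1 3 = (0 : ℝ) := by
  rw [castM, show asymZ cMZ 3 1 3 = (0 : ℤ) from by decide]; norm_num

lemma vM_3_1_4 : asym3 rhoMinusCoeff 3 1 4 = (0 : ℝ) := by
  rw [castM, show asymZ cMZ 3 1 4 = (0 : ℤ) from by decide]; norm_num

lemma vM_3_1_5 : asym3 rhoMinusCoeff 3 1 5 = (1 : ℝ) := by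
  rw [castM, show asymZ cMZ 3 1 5 = (1 : ℤ) from by decide]; norm_num

lemma vM_3_2_3 : asym3 rhoMinusCoeff 3 2 3 = (0 : ℝ) := by
  rw [castM, show asymZ cMZ 3 2 3 = (0 : ℤ) from by decide]; norm_num

lemma vM_3_2_4 : asym3 rhoMinusCoeff 3 2 4 = (0 : ℝ) := by
  rw [castM, show asymZ cMZ 3 2 4 = (0 : ℤ) from by decide]; norm_num

lemma vM_3_2_5 : asym3 rhoMinusCoeff 3 2 5 = (0 : ℝ) := by
  rw [castM, show asymZ cMZ 3 2 5 = (0 : ℤ) from by decide]; norm_num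

lemma vM_3_3_4 : asym3 rhoMinusCoeff 3 3 4 = (0 : ℝ) := by
  rw [castM, show asymZ cMZ 3 3 4 = (0 : ℤ) from by decide]; norm_num

lemma vM_3_3_5 : asym3 rhoMinusCoeff 3 3 5 = (0 : ℝ) := by
  rw [castM, show asymZ cMZ 3 3 5 = (0 : ℤ) from by decide]; norm_num

lemma vM_3_4_0 : asym3 rhoMinusCoeff 3 4 0 = (1 : ℝ) := by
  rw [castM, show asymZ cMZ 3 4 0 = (1 : ℤ) from by decide]; norm_num

lemma vM_3_4_1 : asym3 rhoMinusCoeff 3 4 1 = (0 : ℝ) := by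
  rw [castM, show asymZ cMZ 3 4 1 = (0 : ℤ) from by decide]; norm_num

lemma vM_3_4_2 : asym3 rhoMinusCoeff 3 4 2 = (0 : ℝ) := by
  rw [castM, show asymZ cMZ 3 4 2 = (0 : ℤ) from by decide]; norm_num

lemma vM_3_4_3 : asym3 rhoMinusCoeff 3 4 3 = (0 : ℝ) := by
  rw [castM, show asymZ cMZ 3 4 3 = (0 : ℤ) from by decide]; norm_num

lemma vM_3_4_4 : asym3 rhoMinusCoeff 3 4 4 = (0 : ℝ) := by
  rw [castM, show asymZ cMZ 3 4 4 = (0 : ℤ) from by decide]; norm_num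

lemma vM_3_4_5 : asym3 rhoMinusCoeff 3 4 5 = (0 : ℝ) := by
  rw [castM, show asymZ cMZ 3 4 5 = (0 : ℤ) from by decide]; norm_num

lemma vM_3_5_5 : asym3 rhoMinusCoeff 3 5 5 = (0 : ℝ) := by
  rw [castM, show asymZ cMZ 3 5 5 = (0 : ℤ) from by decide]; norm_num

lemma vM_4_1_2 : asym3 rhoMinusCoeff 4 1 2 = (1 : ℝ) := by
  rw [castM, show asymZ cMZ 4 1 2 = (1 : ℤ) from by decide]; norm_num

lemma vM_4_1_3 : asym3 rhoMinusCoeff 4 1 3 = (0 : ℝ) := by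
  rw [castM, show asymZ cMZ 4 1 3 = (0 : ℤ) from by decide]; norm_num

lemma vM_4_1_4 : asym3 rhoMinusCoeff 4 1 4 = (0 : ℝ) := by
  rw [castM, show asymZ cMZ 4 1 4 = (0 : ℤ) from by decide]; norm_num

lemma vM_4_1_5 : asym3 rhoMinusCoeff 4 1 5 = (0 : ℝ) := by
  rw [castM, show asymZ cMZ 4 1 5 = (0 : ℤ) from by decide]; norm_num

lemma vM_4_2_3 : asym3 rhoMinusCoeff 4 2 3 = (0 : ℝ) := by
  rw [castM, show asymZ cMZ 4 2 3 = (0 : ℤ) from by decide]; norm_num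

lemma vM_4_2_4 : asym3 rhoMinusCoeff 4 2 4 = (0 : ℝ) := by
  rw [castM, show asymZ cMZ 4 2 4 = (0 : ℤ) from by decide]; norm_num

lemma vM_4_2_5 : asym3 rhoMinusCoeff 4 2 5 = (0 : ℝ) := by
  rw [castM, show asymZ cMZ 4 2 5 = (0 : ℤ) from by decide]; norm_num

lemma vM_4_3_4 : asym3 rhoMinusCoeff 4 3 4 = (0 : ℝ) := by
  rw [castM, show asymZ cMZ 4 3 4 = (0 : ℤ) from by decide]; norm_num

lemma vM_4_3_5 : asym3 rhoMinusCoeff 4 3 5 = (0 : ℝ) := by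
  rw [castM, show asymZ cMZ 4 3 5 = (0 : ℤ) from by decide]; norm_num

lemma vM_4_4_5 : asym3 rhoMinusCoeff 4 4 5 = (0 : ℝ) := by
  rw [castM, show asymZ cMZ 4 4 5 = (0 : ℤ) from by decide]; norm_num

lemma vM_5_1_2 : asym3 rhoMinusCoeff 5 1 2 = (0 : ℝ) := by
  rw [castM, show asymZ cMZ 5 1 2 = (0 : ℤ) from by decide]; norm_num

lemma vM_5_1_3 : asym3 rhoMinusCoeff 5 1 3 = (-1 : ℝ) := by
  rw [castM, show asymZ cMZ 5 1 3 = (-1 : ℤ) from by decide]; norm_num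

lemma vM_5_1_4 : asym3 rhoMinusCoeff 5 1 4 = (0 : ℝ) := by
  rw [castM, show asymZ cMZ 5 1 4 = (0 : ℤ) from by decide]; norm_num

lemma vM_5_1_5 : asym3 rhoMinusCoeff 5 1 5 = (0 : ℝ) := by
  rw [castM, show asymZ cMZ 5 1 5 = (0 : ℤ) from by decide]; norm_num

lemma vM_5_2_3 : asym3 rhoMinusCoeff 5 2 3 = (0 : ℝ) := by
  rw [castM, show asymZ cMZ 5 2 3 = (0 : ℤ) from by decide]; norm_num

lemma vM_5_2_4 : asym3 rhoMinusCoeff 5 2 4 = (0 : ℝ) := by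
  rw [castM, show asymZ cMZ 5 2 4 = (0 : ℤ) from by decide]; norm_num

lemma vM_5_2_5 : asym3 rhoMinusCoeff 5 2 5 = (0 : ℝ) := by
  rw [castM, show asymZ cMZ 5 2 5 = (0 : ℤ) from by decide]; norm_num

lemma vM_5_3_4 : asym3 rhoMinusCoeff 5 3 4 = (0 : ℝ) := by
  rw [castM, show asymZ cMZ 5 3 4 = (0 : ℤ) from by decide]; norm_num

lemma vM_5_3_5 : asym3 rhoMinusCoeff 5 3 5 = (0 : ℝ) := by
  rw [castM, show asymZ cMZ 5 3 5 = (0 : ℤ) from by decide]; norm_num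

lemma vM_5_4_5 : asym3 rhoMinusCoeff 5 4 5 = (0 : ℝ) := by
  rw [castM, show asymZ cMZ 5 4 5 = (0 : ℤ) from by decide]; norm_num

lemma qP_0_1_2 (d : Fin 6 → Fin 6 → ℝ) : eqn3 rhoPlusCoeff d 0 1 2 = (-1) * d 4 1 + (-1) * d 5 0 := by
  rw [eqn3_eval]; rw [vP_0_0_2, vP_0_1_0, vP_0_1_1, vP_0_1_2, vP_0_1_3, vP_0_1_4, vP_0_1_5, vP_0_2_2, vP_0_3_2, vP_0_4_2, vP_0_5_2, vP_1_1_2, vP_2_1_2, vP_3_1_2, vP_4_1_2, vP_5_1_2]; ring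

lemma qM_0_1_2 (d : Fin 6 → Fin 6 → ℝ) : eqn3 rhoMinusCoeff d 0 1 2 = (1) * d 4 0 + (-1) * d 5 1 := by
  rw [eqn3_eval]; rw [vM_0_0_2, vM_0_1_0, vM_0_1_1, vM_0_1_2, vM_0_1_3, vM_0_1_4, vM_0_1_5, vM_0_2_2, vM_0_3_2, vM_0_4_2, vM_0_5_2, vM_1_1_2, vM_2_1_2, vM_3_1_2, vM_4_1_2, vM_5_1_2]; ring

lemma qP_0_1_3 (d : Fin 6 → Fin 6 → ℝ) : eqn3 rhoPlusCoeff d 0 1 3 = (-1) * d 4 0 + (1) * d 5 1 := by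
  rw [eqn3_eval]; rw [vP_0_0_3, vP_0_1_0, vP_0_1_1, vP_0_1_2, vP_0_1_3, vP_0_1_4, vP_0_1_5, vP_0_2_3, vP_0_3_3, vP_0_4_3, vP_0_5_3, vP_1_1_3, vP_2_1_3, vP_3_1_3, vP_4_1_3, vP_5_1_3]; ring

lemma qM_0_1_3 (d : Fin 6 → Fin 6 → ℝ) : eqn3 rhoMinusCoeff d 0 1 3 = (-1) * d 4 1 + (-1) * d 5 0 := by
  rw [eqn3_eval]; rw [vM_0_0_3, vM_0_1_0, vM_0_1_1, vM_0_1_2, vM_0_1_3, vM_0_1_4, vM_0_1_5, vM_0_2_3, vM_0_3_3, vM_0_4_3, vM_0_5_3, vM_1_1_3, vM_2_1_3, vM_3_1_3, vM_4_1_3, vM_5_1_3]; ring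

lemma qP_0_1_4 (d : Fin 6 → Fin 6 → ℝ) : eqn3 rhoPlusCoeff d 0 1 4 = (1) * d 2 1 + (1) * d 3 0 := by
  rw [eqn3_eval]; rw [vP_0_0_4, vP_0_1_0, vP_0_1_1, vP_0_1_2, vP_0_1_3, vP_0_1_4, vP_0_1_5, vP_0_2_4, vP_0_3_4, vP_0_4_4, vP_0_5_4, vP_1_1_4, vP_2_1_4, vP_3_1_4, vP_4_1_4, vP_5_1_4]; ring

lemma qM_0_1_4 (d : Fin 6 → Fin 6 → ℝ) : eqn3 rhoMinusCoeff d 0 1 4 = (-1) * d 2 0 + (1) * d 3 1 := by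
  rw [eqn3_eval]; rw [vM_0_0_4, vM_0_1_0, vM_0_1_1, vM_0_1_2, vM_0_1_3, vM_0_1_4, vM_0_1_5, vM_0_2_4, vM_0_3_4, vM_0_4_4, vM_0_5_4, vM_1_1_4, vM_2_1_4, vM_3_1_4, vM_4_1_4, vM_5_1_4]; ring

lemma qP_0_1_5 (d : Fin 6 → Fin 6 → ℝ) : eqn3 rhoPlusCoeff d 0 1 5 = (1) * d 2 0 + (-1) * d 3 1 := by
  rw [eqn3_eval]; rw [vP_0_0_5, vP_0_1_0, vP_0_1_1, vP_0_1_2, vP_0_1_3, vP_0_1_4, vP_0_1_5, vP_0_2_5, vP_0_3_5, vP_0_4_5, vP_0_5_5, vP_1_1_5, vP_2_1_5, vP_3_1_5, vP_4_1_5, vP_5_1_5]; ring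

lemma qM_0_1_5 (d : Fin 6 → Fin 6 → ℝ) : eqn3 rhoMinusCoeff d 0 1 5 = (1) * d 2 1 + (1) * d 3 0 := by
  rw [eqn3_eval]; rw [vM_0_0_5, vM_0_1_0, vM_0_1_1, vM_0_1_2, vM_0_1_3, vM_0_1_4, vM_0_1_5, vM_0_2_5, vM_0_3_5, vM_0_4_5, vM_0_5_5, vM_1_1_5, vM_2_1_5, vM_3_1_5, vM_4_1_5, vM_5_1_5]; ring

lemma qP_0_2_3 (d : Fin 6 → Fin 6 → ℝ) : eqn3 rhoPlusCoeff d 0 2 3 = (1) * d 4 3 + (1) * d 5 2 := by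
  rw [eqn3_eval]; rw [vP_0_0_3, vP_0_1_3, vP_0_2_0, vP_0_2_1, vP_0_2_2, vP_0_2_3, vP_0_2_4, vP_0_2_5, vP_0_3_3, vP_0_4_3, vP_0_5_3, vP_1_2_3, vP_2_2_3, vP_3_2_3, vP_4_2_3, vP_5_2_3]; ring

lemma qM_0_2_3 (d : Fin 6 → Fin 6 → ℝ) : eqn3 rhoMinusCoeff d 0 2 3 = (-1) * d 4 2 + (1) * d 5 3 := by
  rw [eqn3_eval]; rw [vM_0_0_3, vM_0_1_3, vM_0_2_0, vM_0_2_1, vM_0_2_2, vM_0_2_3, vM_0_2_4, vM_0_2_5, vM_0_3_3, vM_0_4_3, vM_0_5_3, vM_1_2_3, vM_2_2_3, vM_3_2_3, vM_4_2_3, vM_5_2_3]; ring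

lemma qP_0_2_4 (d : Fin 6 → Fin 6 → ℝ) : eqn3 rhoPlusCoeff d 0 2 4 = (1) * d 0 0 + (1) * d 2 2 + (1) * d 4 4 := by
  rw [eqn3_eval]; rw [vP_0_0_4, vP_0_1_4, vP_0_2_0, vP_0_2_1, vP_0_2_2, vP_0_2_3, vP_0_2_4, vP_0_2_5, vP_0_3_4, vP_0_4_4, vP_0_5_4, vP_1_2_4, vP_2_2_4, vP_3_2_4, vP_4_2_4, vP_5_2_4]; ring

lemma qM_0_2_4 (d : Fin 6 → Fin 6 → ℝ) : eqn3 rhoMinusCoeff d 0 2 4 = (1) * d 1 0 + (1) * d 3 2 + (1) * d 5 4 := by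
  rw [eqn3_eval]; rw [vM_0_0_4, vM_0_1_4, vM_0_2_0, vM_0_2_1, vM_0_2_2, vM_0_2_3, vM_0_2_4, vM_0_2_5, vM_0_3_4, vM_0_4_4, vM_0_5_4, vM_1_2_4, vM_2_2_4, vM_3_2_4, vM_4_2_4, vM_5_2_4]; ring

lemma qP_0_2_5 (d : Fin 6 → Fin 6 → ℝ) : eqn3 rhoPlusCoeff d 0 2 5 = (-1) * d 1 0 + (-1) * d 3 2 + (1) * d 4 5 := by
  rw [eqn3_eval]; rw [vP_0_0_5, vP_0_1_5, vP_0_2_0, vP_0_2_1, vP_0_2_2, vP_0_2_3, vP_0_2_4, vP_0_2_5, vP_0_3_5, vP_0_4_5, vP_0_5_5, vP_1_2_5, vP_2_2_5, vP_3_2_5, vP_4_2_5, vP_5_2_5]; ring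

lemma qM_0_2_5 (d : Fin 6 → Fin 6 → ℝ) : eqn3 rhoMinusCoeff d 0 2 5 = (1) * d 0 0 + (1) * d 2 2 + (1) * d 5 5 := by
  rw [eqn3_eval]; rw [vM_0_0_5, vM_0_1_5, vM_0_2_0, vM_0_2_1, vM_0_2_2, vM_0_2_3, vM_0_2_4, vM_0_2_5, vM_0_3_5, vM_0_4_5, vM_0_5_5, vM_1_2_5, vM_2_2_5, vM_3_2_5, vM_4_2_5, vM_5_2_5]; ring

lemma qP_0_3_4 (d : Fin 6 → Fin 6 → ℝ) : eqn3 rhoPlusCoeff d 0 3 4 = (-1) * d 1 0 + (1) * d 2 3 + (-1) * d 5 4 := by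
  rw [eqn3_eval]; rw [vP_0_0_4, vP_0_1_4, vP_0_2_4, vP_0_3_0, vP_0_3_1, vP_0_3_2, vP_0_3_3, vP_0_3_4, vP_0_3_5, vP_0_4_4, vP_0_5_4, vP_1_3_4, vP_2_3_4, vP_3_3_4, vP_4_3_4, vP_5_3_4]; ring

lemma qM_0_3_4 (d : Fin 6 → Fin 6 → ℝ) : eqn3 rhoMinusCoeff d 0 3 4 = (1) * d 0 0 + (1) * d 3 3 + (1) * d 4 4 := by
  rw [eqn3_eval]; rw [vM_0_0_4, vM_0_1_4, vM_0_2_4, vM_0_3_0, vM_0_3_1, vM_0_3_2, vM_0_3_3, vM_0_3_4, vM_0_3_5, vM_0_4_4, vM_0_5_4, vM_1_3_4, vM_2_3_4, vM_3_3_4, vM_4_3_4, vM_5_3_4]; ring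

lemma qP_0_3_5 (d : Fin 6 → Fin 6 → ℝ) : eqn3 rhoPlusCoeff d 0 3 5 = (-1) * d 0 0 + (-1) * d 3 3 + (-1) * d 5 5 := by
  rw [eqn3_eval]; rw [vP_0_0_5, vP_0_1_5, vP_0_2_5, vP_0_3_0, vP_0_3_1, vP_0_3_2, vP_0_3_3, vP_0_3_4, vP_0_3_5, vP_0_4_5, vP_0_5_5, vP_1_3_5, vP_2_3_5, vP_3_3_5, vP_4_3_5, vP_5_3_5]; ring

lemma qM_0_3_5 (d : Fin 6 → Fin 6 → ℝ) : eqn3 rhoMinusCoeff d 0 3 5 = (-1) * d 1 0 + (1) * d 2 3 + (1) * d 4 5 := by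
  rw [eqn3_eval]; rw [vM_0_0_5, vM_0_1_5, vM_0_2_5, vM_0_3_0, vM_0_3_1, vM_0_3_2, vM_0_3_3, vM_0_3_4, vM_0_3_5, vM_0_4_5, vM_0_5_5, vM_1_3_5, vM_2_3_5, vM_3_3_5, vM_4_3_5, vM_5_3_5]; ring

lemma qP_0_4_5 (d : Fin 6 → Fin 6 → ℝ) : eqn3 rhoPlusCoeff d 0 4 5 = (-1) * d 2 5 + (-1) * d 3 4 := by
  rw [eqn3_eval]; rw [vP_0_0_5, vP_0_1_5, vP_0_2_5, vP_0_3_5, vP_0_4_0, vP_0_4_1, vP_0_4_2, vP_0_4_3, vP_0_4_4, vP_0_4_5, vP_0_5_5, vP_1_4_5, vP_2_4_5, vP_3_4_5, vP_4_4_5, vP_5_4_5]; ring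

lemma qM_0_4_5 (d : Fin 6 → Fin 6 → ℝ) : eqn3 rhoMinusCoeff d 0 4 5 = (1) * d 2 4 + (-1) * d 3 5 := by
  rw [eqn3_eval]; rw [vM_0_0_5, vM_0_1_5, vM_0_2_5, vM_0_3_5, vM_0_4_0, vM_0_4_1, vM_0_4_2, vM_0_4_3, vM_0_4_4, vM_0_4_5, vM_0_5_5, vM_1_4_5, vM_2_4_5, vM_3_4_5, vM_4_4_5, vM_5_4_5]; ring

lemma qP_1_2_3 (d : Fin 6 → Fin 6 → ℝ) : eqn3 rhoPlusCoeff d 1 2 3 = (1) * d 4 2 + (-1) * d 5 3 := by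
  rw [eqn3_eval]; rw [vP_0_2_3, vP_1_0_3, vP_1_1_3, vP_1_2_0, vP_1_2_1, vP_1_2_2, vP_1_2_3, vP_1_2_4, vP_1_2_5, vP_1_3_3, vP_1_4_3, vP_1_5_3, vP_2_2_3, vP_3_2_3, vP_4_2_3, vP_5_2_3]; ring

lemma qM_1_2_3 (d : Fin 6 → Fin 6 → ℝ) : eqn3 rhoMinusCoeff d 1 2 3 = (1) * d 4 3 + (1) * d 5 2 := by
  rw [eqn3_eval]; rw [vM_0_2_3, vM_1_0_3, vM_1_1_3, vM_1_2_0, vM_1_2_1, vM_1_2_2, vM_1_2_3, vM_1_2_4, vM_1_2_5, vM_1_3_3, vM_1_4_3, vM_1_5_3, vM_2_2_3, vM_3_2_3, vM_4_2_3, vM_5_2_3]; ring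

lemma qP_1_2_4 (d : Fin 6 → Fin 6 → ℝ) : eqn3 rhoPlusCoeff d 1 2 4 = (1) * d 0 1 + (-1) * d 3 2 + (-1) * d 5 4 := by
  rw [eqn3_eval]; rw [vP_0_2_4, vP_1_0_4, vP_1_1_4, vP_1_2_0, vP_1_2_1, vP_1_2_2, vP_1_2_3, vP_1_2_4, vP_1_2_5, vP_1_3_4, vP_1_4_4, vP_1_5_4, vP_2_2_4, vP_3_2_4, vP_4_2_4, vP_5_2_4]; ring

lemma qM_1_2_4 (d : Fin 6 → Fin 6 → ℝ) : eqn3 rhoMinusCoeff d 1 2 4 = (1) * d 1 1 + (1) * d 2 2 + (1) * d 4 4 := by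
  rw [eqn3_eval]; rw [vM_0_2_4, vM_1_0_4, vM_1_1_4, vM_1_2_0, vM_1_2_1, vM_1_2_2, vM_1_2_3, vM_1_2_4, vM_1_2_5, vM_1_3_4, vM_1_4_4, vM_1_5_4, vM_2_2_4, vM_3_2_4, vM_4_2_4, vM_5_2_4]; ring

lemma qP_1_2_5 (d : Fin 6 → Fin 6 → ℝ) : eqn3 rhoPlusCoeff d 1 2 5 = (-1) * d 1 1 + (-1) * d 2 2 + (-1) * d 5 5 := by
  rw [eqn3_eval]; rw [vP_0_2_5, vP_1_0_5, vP_1_1_5, vP_1_2_0, vP_1_2_1, vP_1_2_2, vP_1_2_3, vP_1_2_4, vP_1_2_5, vP_1_3_5, vP_1_4_5, vP_1_5_5, vP_2_2_5, vP_3_2_5, vP_4_2_5, vP_5_2_5]; ring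

lemma qM_1_2_5 (d : Fin 6 → Fin 6 → ℝ) : eqn3 rhoMinusCoeff d 1 2 5 = (1) * d 0 1 + (-1) * d 3 2 + (1) * d 4 5 := by
  rw [eqn3_eval]; rw [vM_0_2_5, vM_1_0_5, vM_1_1_5, vM_1_2_0, vM_1_2_1, vM_1_2_2, vM_1_2_3, vM_1_2_4, vM_1_2_5, vM_1_3_5, vM_1_4_5, vM_1_5_5, vM_2_2_5, vM_3_2_5, vM_4_2_5, vM_5_2_5]; ring

lemma qP_1_3_4 (d : Fin 6 → Fin 6 → ℝ) : eqn3 rhoPlusCoeff d 1 3 4 = (-1) * d 1 1 + (-1) * d 3 3 + (-1) * d 4 4 := by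
  rw [eqn3_eval]; rw [vP_0_3_4, vP_1_0_4, vP_1_1_4, vP_1_2_4, vP_1_3_0, vP_1_3_1, vP_1_3_2, vP_1_3_3, vP_1_3_4, vP_1_3_5, vP_1_4_4, vP_1_5_4, vP_2_3_4, vP_3_3_4, vP_4_3_4, vP_5_3_4]; ring

lemma qM_1_3_4 (d : Fin 6 → Fin 6 → ℝ) : eqn3 rhoMinusCoeff d 1 3 4 = (1) * d 0 1 + (1) * d 2 3 + (-1) * d 5 4 := by
  rw [eqn3_eval]; rw [vM_0_3_4, vM_1_0_4, vM_1_1_4, vM_1_2_4, vM_1_3_0, vM_1_3_1, vM_1_3_2, vM_1_3_3, vM_1_3_4, vM_1_3_5, vM_1_4_4, vM_1_5_4, vM_2_3_4, vM_3_3_4, vM_4_3_4, vM_5_3_4]; ring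

lemma qP_1_3_5 (d : Fin 6 → Fin 6 → ℝ) : eqn3 rhoPlusCoeff d 1 3 5 = (-1) * d 0 1 + (-1) * d 2 3 + (-1) * d 4 5 := by
  rw [eqn3_eval]; rw [vP_0_3_5, vP_1_0_5, vP_1_1_5, vP_1_2_5, vP_1_3_0, vP_1_3_1, vP_1_3_2, vP_1_3_3, vP_1_3_4, vP_1_3_5, vP_1_4_5, vP_1_5_5, vP_2_3_5, vP_3_3_5, vP_4_3_5, vP_5_3_5]; ring

lemma qM_1_3_5 (d : Fin 6 → Fin 6 → ℝ) : eqn3 rhoMinusCoeff d 1 3 5 = (-1) * d 1 1 + (-1) * d 3 3 + (-1) * d 5 5 := by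
  rw [eqn3_eval]; rw [vM_0_3_5, vM_1_0_5, vM_1_1_5, vM_1_2_5, vM_1_3_0, vM_1_3_1, vM_1_3_2, vM_1_3_3, vM_1_3_4, vM_1_3_5, vM_1_4_5, vM_1_5_5, vM_2_3_5, vM_3_3_5, vM_4_3_5, vM_5_3_5]; ring

lemma qP_1_4_5 (d : Fin 6 → Fin 6 → ℝ) : eqn3 rhoPlusCoeff d 1 4 5 = (-1) * d 2 4 + (1) * d 3 5 := by
  rw [eqn3_eval]; rw [vP_0_4_5, vP_1_0_5, vP_1_1_5, vP_1_2_5, vP_1_3_5, vP_1_4_0, vP_1_4_1, vP_1_4_2, vP_1_4_3, vP_1_4_4, vP_1_4_5, vP_1_5_5, vP_2_4_5, vP_3_4_5, vP_4_4_5, vP_5_4_5]; ring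

lemma qM_1_4_5 (d : Fin 6 → Fin 6 → ℝ) : eqn3 rhoMinusCoeff d 1 4 5 = (-1) * d 2 5 + (-1) * d 3 4 := by
  rw [eqn3_eval]; rw [vM_0_4_5, vM_1_0_5, vM_1_1_5, vM_1_2_5, vM_1_3_5, vM_1_4_0, vM_1_4_1, vM_1_4_2, vM_1_4_3, vM_1_4_4, vM_1_4_5, vM_1_5_5, vM_2_4_5, vM_3_4_5, vM_4_4_5, vM_5_4_5]; ring

lemma qP_2_3_4 (d : Fin 6 → Fin 6 → ℝ) : eqn3 rhoPlusCoeff d 2 3 4 = (-1) * d 0 3 + (-1) * d 1 2 := by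
  rw [eqn3_eval]; rw [vP_0_3_4, vP_1_3_4, vP_2_0_4, vP_2_1_4, vP_2_2_4, vP_2_3_0, vP_2_3_1, vP_2_3_2, vP_2_3_3, vP_2_3_4, vP_2_3_5, vP_2_4_4, vP_2_5_4, vP_3_3_4, vP_4_3_4, vP_5_3_4]; ring

lemma qM_2_3_4 (d : Fin 6 → Fin 6 → ℝ) : eqn3 rhoMinusCoeff d 2 3 4 = (1) * d 0 2 + (-1) * d 1 3 := by
  rw [eqn3_eval]; rw [vM_0_3_4, vM_1_3_4, vM_2_0_4, vM_2_1_4, vM_2_2_4, vM_2_3_0, vM_2_3_1, vM_2_3_2, vM_2_3_3, vM_2_3_4, vM_2_3_5, vM_2_4_4, vM_2_5_4, vM_3_3_4, vM_4_3_4, vM_5_3_4]; ring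

lemma qP_2_3_5 (d : Fin 6 → Fin 6 → ℝ) : eqn3 rhoPlusCoeff d 2 3 5 = (-1) * d 0 2 + (1) * d 1 3 := by
  rw [eqn3_eval]; rw [vP_0_3_5, vP_1_3_5, vP_2_0_5, vP_2_1_5, vP_2_2_5, vP_2_3_0, vP_2_3_1, vP_2_3_2, vP_2_3_3, vP_2_3_4, vP_2_3_5, vP_2_4_5, vP_2_5_5, vP_3_3_5, vP_4_3_5, vP_5_3_5]; ring

lemma qM_2_3_5 (d : Fin 6 → Fin 6 → ℝ) : eqn3 rhoMinusCoeff d 2 3 5 = (-1) * d 0 3 + (-1) * d 1 2 := by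
  rw [eqn3_eval]; rw [vM_0_3_5, vM_1_3_5, vM_2_0_5, vM_2_1_5, vM_2_2_5, vM_2_3_0, vM_2_3_1, vM_2_3_2, vM_2_3_3, vM_2_3_4, vM_2_3_5, vM_2_4_5, vM_2_5_5, vM_3_3_5, vM_4_3_5, vM_5_3_5]; ring

lemma qP_2_4_5 (d : Fin 6 → Fin 6 → ℝ) : eqn3 rhoPlusCoeff d 2 4 5 = (1) * d 0 5 + (1) * d 1 4 := by
  rw [eqn3_eval]; rw [vP_0_4_5, vP_1_4_5, vP_2_0_5, vP_2_1_5, vP_2_2_5, vP_2_3_5, vP_2_4_0, vP_2_4_1, vP_2_4_2, vP_2_4_3, vP_2_4_4, vP_2_4_5, vP_2_5_5, vP_3_4_5, vP_4_4_5, vP_5_4_5]; ring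

lemma qM_2_4_5 (d : Fin 6 → Fin 6 → ℝ) : eqn3 rhoMinusCoeff d 2 4 5 = (-1) * d 0 4 + (1) * d 1 5 := by
  rw [eqn3_eval]; rw [vM_0_4_5, vM_1_4_5, vM_2_0_5, vM_2_1_5, vM_2_2_5, vM_2_3_5, vM_2_4_0, vM_2_4_1, vM_2_4_2, vM_2_4_3, vM_2_4_4, vM_2_4_5, vM_2_5_5, vM_3_4_5, vM_4_4_5, vM_5_4_5]; ring

lemma qP_3_4_5 (d : Fin 6 → Fin 6 → ℝ) : eqn3 rhoPlusCoeff d 3 4 5 = (1) * d 0 4 + (-1) * d 1 5 := by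
  rw [eqn3_eval]; rw [vP_0_4_5, vP_1_4_5, vP_2_4_5, vP_3_0_5, vP_3_1_5, vP_3_2_5, vP_3_3_5, vP_3_4_0, vP_3_4_1, vP_3_4_2, vP_3_4_3, vP_3_4_4, vP_3_4_5, vP_3_5_5, vP_4_4_5, vP_5_4_5]; ring

lemma qM_3_4_5 (d : Fin 6 → Fin 6 → ℝ) : eqn3 rhoMinusCoeff d 3 4 5 = (1) * d 0 5 + (1) * d 1 4 := by
  rw [eqn3_eval]; rw [vM_0_4_5, vM_1_4_5, vM_2_4_5, vM_3_0_5, vM_3_1_5, vM_3_2_5, vM_3_3_5, vM_3_4_0, vM_3_4_1, vM_3_4_2, vM_3_4_3, vM_3_4_4, vM_3_4_5, vM_3_5_5, vM_4_4_5, vM_5_4_5]; ring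

set_option maxHeartbeats 1000000 in
/-- For the 3-forms `ρ⁺ = e¹³⁵ − e¹⁴⁶ − e²³⁶ − e²⁴⁵` and
`ρ⁻ = e¹³⁶ + e¹⁴⁵ + e²³⁵ − e²⁴⁶` on `ℝ⁶`, and any linear endomorphism `D` of `ℝ⁶`,
`θ(D)ρ⁺ = 0` if and only if `θ(D)ρ⁻ = 0`. -/
theorem theta_rhoPlus_eq_zero_iff_theta_rhoMinus_eq_zero
    (ρp ρm : AlternatingMap ℝ (Fin 6 → ℝ) ℝ (Fin 3))
    (hρp : ∀ i j k : Fin 6, i < j → j < k →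
      ρp ![stdB6 i, stdB6 j, stdB6 k] = rhoPlusCoeff i j k)
    (hρm : ∀ i j k : Fin 6, i < j → j < k →
      ρm ![stdB6 i, stdB6 j, stdB6 k] = rhoMinusCoeff i j k)
    (D : (Fin 6 → ℝ) →ₗ[ℝ] (Fin 6 → ℝ)) :
    (∀ X Y Z : Fin 6 → ℝ, theta3 D ρp X Y Z = 0) ↔
    (∀ X Y Z : Fin 6 → ℝ, theta3 D ρm X Y Z = 0) := by
  rw [theta3_iff_eqn3 D ρp rhoPlusCoeff rhoPlusCoeff_zero hρp,
      theta3_iff_eqn3 D ρm rhoMinusCoeff rhoMinusCoeff_zero hρm]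
  set d : Fin 6 → Fin 6 → ℝ := fun a b => D (stdB6 b) a with hd
  constructor
  · intro H
    have hP012 := H 0 1 2 (by decide) (by decide)
    rw [qP_0_1_2] at hP012
    have hP013 := H 0 1 3 (by decide) (by decide)
    rw [qP_0_1_3] at hP013
    have hP014 := H 0 1 4 (by decide) (by decide)
    rw [qP_0_1_4] at hP014
    have hP015 := H 0 1 5 (by decide) (by decide)
    rw [qP_0_1_5] at hP015
    have hP023 := H 0 2 3 (by decide) (by decide)
    rw [qP_0_2_3] at hP023
    have hP024 := H 0 2 4 (by decide) (by decide)
    rw [qP_0_2_4] at hP024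
    have hP025 := H 0 2 5 (by decide) (by decide)
    rw [qP_0_2_5] at hP025
    have hP034 := H 0 3 4 (by decide) (by decide)
    rw [qP_0_3_4] at hP034
    have hP035 := H 0 3 5 (by decide) (by decide)
    rw [qP_0_3_5] at hP035
    have hP045 := H 0 4 5 (by decide) (by decide)
    rw [qP_0_4_5] at hP045
    have hP123 := H 1 2 3 (by decide) (by decide)
    rw [qP_1_2_3] at hP123
    have hP124 := H 1 2 4 (by decide) (by decide)
    rw [qP_1_2_4] at hP124
    have hP125 := H 1 2 5 (by decide) (by decide)
    rw [qP_1_2_5] at hP125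
    have hP134 := H 1 3 4 (by decide) (by decide)
    rw [qP_1_3_4] at hP134
    have hP135 := H 1 3 5 (by decide) (by decide)
    rw [qP_1_3_5] at hP135
    have hP145 := H 1 4 5 (by decide) (by decide)
    rw [qP_1_4_5] at hP145
    have hP234 := H 2 3 4 (by decide) (by decide)
    rw [qP_2_3_4] at hP234
    have hP235 := H 2 3 5 (by decide) (by decide)
    rw [qP_2_3_5] at hP235
    have hP245 := H 2 4 5 (by decide) (by decide)
    rw [qP_2_4_5] at hP245
    have hP345 := H 3 4 5 (by decide) (by decide)
    rw [qP_3_4_5] at hP345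
    have MM012 : eqn3 rhoMinusCoeff d 0 1 2 = 0 := by
      rw [qM_0_1_2]; linear_combination (-1 : ℝ) * hP013
    have MM013 : eqn3 rhoMinusCoeff d 0 1 3 = 0 := by
      rw [qM_0_1_3]; linear_combination (1 : ℝ) * hP012
    have MM014 : eqn3 rhoMinusCoeff d 0 1 4 = 0 := by
      rw [qM_0_1_4]; linear_combination (-1 : ℝ) * hP015
    have MM015 : eqn3 rhoMinusCoeff d 0 1 5 = 0 := by
      rw [qM_0_1_5]; linear_combination (1 : ℝ) * hP014
    have MM023 : eqn3 rhoMinusCoeff d 0 2 3 = 0 := by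
      rw [qM_0_2_3]; linear_combination (-1 : ℝ) * hP123
    have MM024 : eqn3 rhoMinusCoeff d 0 2 4 = 0 := by
      rw [qM_0_2_4]; linear_combination (-1/2 : ℝ) * hP025 + (-1/2 : ℝ) * hP034 + (-1/2 : ℝ) * hP124 + (-1/2 : ℝ) * hP135
    have MM025 : eqn3 rhoMinusCoeff d 0 2 5 = 0 := by
      rw [qM_0_2_5]; linear_combination (1/2 : ℝ) * hP024 + (-1/2 : ℝ) * hP035 + (-1/2 : ℝ) * hP125 + (1/2 : ℝ) * hP134
    have MM034 : eqn3 rhoMinusCoeff d 0 3 4 = 0 := by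
      rw [qM_0_3_4]; linear_combination (1/2 : ℝ) * hP024 + (-1/2 : ℝ) * hP035 + (1/2 : ℝ) * hP125 + (-1/2 : ℝ) * hP134
    have MM035 : eqn3 rhoMinusCoeff d 0 3 5 = 0 := by
      rw [qM_0_3_5]; linear_combination (1/2 : ℝ) * hP025 + (1/2 : ℝ) * hP034 + (-1/2 : ℝ) * hP124 + (-1/2 : ℝ) * hP135
    have MM045 : eqn3 rhoMinusCoeff d 0 4 5 = 0 := by
      rw [qM_0_4_5]; linear_combination (-1 : ℝ) * hP145
    have MM123 : eqn3 rhoMinusCoeff d 1 2 3 = 0 := by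
      rw [qM_1_2_3]; linear_combination (1 : ℝ) * hP023
    have MM124 : eqn3 rhoMinusCoeff d 1 2 4 = 0 := by
      rw [qM_1_2_4]; linear_combination (1/2 : ℝ) * hP024 + (1/2 : ℝ) * hP035 + (-1/2 : ℝ) * hP125 + (-1/2 : ℝ) * hP134
    have MM125 : eqn3 rhoMinusCoeff d 1 2 5 = 0 := by
      rw [qM_1_2_5]; linear_combination (1/2 : ℝ) * hP025 + (-1/2 : ℝ) * hP034 + (1/2 : ℝ) * hP124 + (-1/2 : ℝ) * hP135
    have MM134 : eqn3 rhoMinusCoeff d 1 3 4 = 0 := by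
      rw [qM_1_3_4]; linear_combination (-1/2 : ℝ) * hP025 + (1/2 : ℝ) * hP034 + (1/2 : ℝ) * hP124 + (-1/2 : ℝ) * hP135
    have MM135 : eqn3 rhoMinusCoeff d 1 3 5 = 0 := by
      rw [qM_1_3_5]; linear_combination (1/2 : ℝ) * hP024 + (1/2 : ℝ) * hP035 + (1/2 : ℝ) * hP125 + (1/2 : ℝ) * hP134
    have MM145 : eqn3 rhoMinusCoeff d 1 4 5 = 0 := by
      rw [qM_1_4_5]; linear_combination (1 : ℝ) * hP045
    have MM234 : eqn3 rhoMinusCoeff d 2 3 4 = 0 := by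
      rw [qM_2_3_4]; linear_combination (-1 : ℝ) * hP235
    have MM235 : eqn3 rhoMinusCoeff d 2 3 5 = 0 := by
      rw [qM_2_3_5]; linear_combination (1 : ℝ) * hP234
    have MM245 : eqn3 rhoMinusCoeff d 2 4 5 = 0 := by
      rw [qM_2_4_5]; linear_combination (-1 : ℝ) * hP345
    have MM345 : eqn3 rhoMinusCoeff d 3 4 5 = 0 := by
      rw [qM_3_4_5]; linear_combination (1 : ℝ) * hP245
    intro i j k hij hjk
    fin_cases i <;> fin_cases j <;> fin_cases k <;>
      first | exact absurd hij (by decide) | exact absurd hjk (by decide) | exact MM012 | exact MM013 | exact MM014 | exact MM015 | exact MM023 | exact MM024 | exact MM025 | exact MM034 | exact MM035 | exact MM045 | exact MM123 | exact MM124 | exact MM125 | exact MM134 | exact MM135 | exact MM145 | exact MM234 | exact MM235 | exact MM245 | exact MM345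
  · intro H
    have hM012 := H 0 1 2 (by decide) (by decide)
    rw [qM_0_1_2] at hM012
    have hM013 := H 0 1 3 (by decide) (by decide)
    rw [qM_0_1_3] at hM013
    have hM014 := H 0 1 4 (by decide) (by decide)
    rw [qM_0_1_4] at hM014
    have hM015 := H 0 1 5 (by decide) (by decide)
    rw [qM_0_1_5] at hM015
    have hM023 := H 0 2 3 (by decide) (by decide)
    rw [qM_0_2_3] at hM023
    have hM024 := H 0 2 4 (by decide) (by decide)
    rw [qM_0_2_4] at hM024
    have hM025 := H 0 2 5 (by decide) (by decide)
    rw [qM_0_2_5] at hM025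
    have hM034 := H 0 3 4 (by decide) (by decide)
    rw [qM_0_3_4] at hM034
    have hM035 := H 0 3 5 (by decide) (by decide)
    rw [qM_0_3_5] at hM035
    have hM045 := H 0 4 5 (by decide) (by decide)
    rw [qM_0_4_5] at hM045
    have hM123 := H 1 2 3 (by decide) (by decide)
    rw [qM_1_2_3] at hM123
    have hM124 := H 1 2 4 (by decide) (by decide)
    rw [qM_1_2_4] at hM124
    have hM125 := H 1 2 5 (by decide) (by decide)
    rw [qM_1_2_5] at hM125
    have hM134 := H 1 3 4 (by decide) (by decide)
    rw [qM_1_3_4] at hM134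
    have hM135 := H 1 3 5 (by decide) (by decide)
    rw [qM_1_3_5] at hM135
    have hM145 := H 1 4 5 (by decide) (by decide)
    rw [qM_1_4_5] at hM145
    have hM234 := H 2 3 4 (by decide) (by decide)
    rw [qM_2_3_4] at hM234
    have hM235 := H 2 3 5 (by decide) (by decide)
    rw [qM_2_3_5] at hM235
    have hM245 := H 2 4 5 (by decide) (by decide)
    rw [qM_2_4_5] at hM245
    have hM345 := H 3 4 5 (by decide) (by decide)
    rw [qM_3_4_5] at hM345
    have MP012 : eqn3 rhoPlusCoeff d 0 1 2 = 0 := by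
      rw [qP_0_1_2]; linear_combination (1 : ℝ) * hM013
    have MP013 : eqn3 rhoPlusCoeff d 0 1 3 = 0 := by
      rw [qP_0_1_3]; linear_combination (-1 : ℝ) * hM012
    have MP014 : eqn3 rhoPlusCoeff d 0 1 4 = 0 := by
      rw [qP_0_1_4]; linear_combination (1 : ℝ) * hM015
    have MP015 : eqn3 rhoPlusCoeff d 0 1 5 = 0 := by
      rw [qP_0_1_5]; linear_combination (-1 : ℝ) * hM014
    have MP023 : eqn3 rhoPlusCoeff d 0 2 3 = 0 := by
      rw [qP_0_2_3]; linear_combination (1 : ℝ) * hM123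
    have MP024 : eqn3 rhoPlusCoeff d 0 2 4 = 0 := by
      rw [qP_0_2_4]; linear_combination (1/2 : ℝ) * hM025 + (1/2 : ℝ) * hM034 + (1/2 : ℝ) * hM124 + (1/2 : ℝ) * hM135
    have MP025 : eqn3 rhoPlusCoeff d 0 2 5 = 0 := by
      rw [qP_0_2_5]; linear_combination (-1/2 : ℝ) * hM024 + (1/2 : ℝ) * hM035 + (1/2 : ℝ) * hM125 + (-1/2 : ℝ) * hM134
    have MP034 : eqn3 rhoPlusCoeff d 0 3 4 = 0 := by
      rw [qP_0_3_4]; linear_combination (-1/2 : ℝ) * hM024 + (1/2 : ℝ) * hM035 + (-1/2 : ℝ) * hM125 + (1/2 : ℝ) * hM134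
    have MP035 : eqn3 rhoPlusCoeff d 0 3 5 = 0 := by
      rw [qP_0_3_5]; linear_combination (-1/2 : ℝ) * hM025 + (-1/2 : ℝ) * hM034 + (1/2 : ℝ) * hM124 + (1/2 : ℝ) * hM135
    have MP045 : eqn3 rhoPlusCoeff d 0 4 5 = 0 := by
      rw [qP_0_4_5]; linear_combination (1 : ℝ) * hM145
    have MP123 : eqn3 rhoPlusCoeff d 1 2 3 = 0 := by
      rw [qP_1_2_3]; linear_combination (-1 : ℝ) * hM023
    have MP124 : eqn3 rhoPlusCoeff d 1 2 4 = 0 := by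
      rw [qP_1_2_4]; linear_combination (-1/2 : ℝ) * hM024 + (-1/2 : ℝ) * hM035 + (1/2 : ℝ) * hM125 + (1/2 : ℝ) * hM134
    have MP125 : eqn3 rhoPlusCoeff d 1 2 5 = 0 := by
      rw [qP_1_2_5]; linear_combination (-1/2 : ℝ) * hM025 + (1/2 : ℝ) * hM034 + (-1/2 : ℝ) * hM124 + (1/2 : ℝ) * hM135
    have MP134 : eqn3 rhoPlusCoeff d 1 3 4 = 0 := by
      rw [qP_1_3_4]; linear_combination (1/2 : ℝ) * hM025 + (-1/2 : ℝ) * hM034 + (-1/2 : ℝ) * hM124 + (1/2 : ℝ) * hM135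
    have MP135 : eqn3 rhoPlusCoeff d 1 3 5 = 0 := by
      rw [qP_1_3_5]; linear_combination (-1/2 : ℝ) * hM024 + (-1/2 : ℝ) * hM035 + (-1/2 : ℝ) * hM125 + (-1/2 : ℝ) * hM134
    have MP145 : eqn3 rhoPlusCoeff d 1 4 5 = 0 := by
      rw [qP_1_4_5]; linear_combination (-1 : ℝ) * hM045
    have MP234 : eqn3 rhoPlusCoeff d 2 3 4 = 0 := by
      rw [qP_2_3_4]; linear_combination (1 : ℝ) * hM235
    have MP235 : eqn3 rhoPlusCoeff d 2 3 5 = 0 := by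
      rw [qP_2_3_5]; linear_combination (-1 : ℝ) * hM234
    have MP245 : eqn3 rhoPlusCoeff d 2 4 5 = 0 := by
      rw [qP_2_4_5]; linear_combination (1 : ℝ) * hM345
    have MP345 : eqn3 rhoPlusCoeff d 3 4 5 = 0 := by
      rw [qP_3_4_5]; linear_combination (-1 : ℝ) * hM245
    intro i j k hij hjk
    fin_cases i <;> fin_cases j <;> fin_cases k <;>
      first | exact absurd hij (by decide) | exact absurd hjk (by decide) | exact MP012 | exact MP013 | exact MP014 | exact MP015 | exact MP023 | exact MP024 | exact MP025 | exact MP034 | exact MP035 | exact MP045 | exact MP123 | exact MP124 | exact MP125 | exact MP134 | exact MP135 | exact MP145 | exact MP234 | exact MP235 | exact MP245 | exact MP345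
end

section
/- Let V = ℝ⁶ with standard basis e₁,…,e₆ and dual basis e¹,…,e⁶, let ρ⁺ = e¹³⁵ − e¹⁴⁶ − e²³⁶ − e²⁴⁵, and let J be the complex structure on V defined by J(e₁) = e₂, J(e₂) = −e₁, J(e₃) = e₄, J(e₄) = −e₃, J(e₅) = e₆, J(e₆) = −e₅. Then for a linear endomorphism D of V, θ(D)ρ⁺ = 0 if and only if D is the real representation of an element of 𝔰𝔩(3,ℂ), i.e. if and only if D∘J = J∘D, tr(D) = 0, and tr(J∘D) = 0. -/
/-! By multilinearity and antisymmetry, `θ(D)ρ⁺ = 0` amounts to the vanishing of `θ(D)ρ⁺` on the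
20 increasing triples of basis vectors. Writing `ρ⁺` as a sum of minors, these are 20 linear
equations in the entries of the matrix of `D`, and each of them is a linear combination of the 18
independent equations of `DJ = JD` and the two trace conditions, and conversely. -/

open Function Matrix

namespace AlternatingMap

section theta

variable {R M N ι : Type*} [Semiring R] [AddCommMonoid M] [Module R M] [AddCommGroup N]
  [Module R N] [DecidableEq ι]

lemma update_linearMapId_apply (D : M →ₗ[R] M) (k : ι) (v : ι → M) :
    (fun l => update (fun _ => LinearMap.id) k D l (v l)) = update v k (D (v k)) := by
  funext l
  rcases eq_or_ne l k with rfl | hlk <;> simp [*]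

variable [Fintype ι]

/-- The terms `k = i` and `k = j` cancel by antisymmetry; the others vanish since `v i = v j`. -/
lemma sum_update_apply_eq_zero_of_eq (γ : M [⋀^ι]→ₗ[R] N) (D : M →ₗ[R] M) {v : ι → M}
    {i j : ι} (hv : v i = v j) (hij : i ≠ j) : ∑ k, γ (update v k (D (v k))) = 0 := by
  have hswap : update v j (D (v j)) = update v i (D (v i)) ∘ Equiv.swap i j := by
    funext k
    rcases eq_or_ne k i with rfl | hki
    · simp [update_of_ne hij, update_of_ne hij.symm, hv]
    rcases eq_or_ne k j with rfl | hkj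
    · simp [hv]
    · simp [hki, hkj, Equiv.swap_apply_of_ne_of_ne]
  rw [Finset.sum_eq_add_of_mem i j (Finset.mem_univ _) (Finset.mem_univ _) hij, hswap,
    γ.map_swap _ hij, add_neg_cancel]
  intro k _ hk
  exact γ.map_eq_zero_of_eq _ (by simp [Ne.symm hk.1, Ne.symm hk.2, hv]) hij

/-- `θ(D)γ (v₁, …, vₙ) = -∑ₖ γ(v₁, …, D vₖ, …, vₙ)`. -/
def theta (D : M →ₗ[R] M) (γ : M [⋀^ι]→ₗ[R] N) : M [⋀^ι]→ₗ[R] N where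
  toMultilinearMap :=
    -∑ k, γ.toMultilinearMap.compLinearMap (update (fun _ => LinearMap.id) k D)
  map_eq_zero_of_eq' v i j hv hij := by
    simp [update_linearMapId_apply, sum_update_apply_eq_zero_of_eq γ D hv hij]

lemma theta_apply (D : M →ₗ[R] M) (γ : M [⋀^ι]→ₗ[R] N) (v : ι → M) :
    theta D γ v = -∑ k, γ (update v k (D (v k))) := by
  simp [theta, update_linearMapId_apply]

end theta

lemma theta_apply_fin_three {R M N : Type*} [Semiring R] [AddCommMonoid M] [Module R M]
    [AddCommGroup N] [Module R N] (D : M →ₗ[R] M) (γ : M [⋀^Fin 3]→ₗ[R] N) (x y z : M) :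
    theta D γ ![x, y, z] = -γ ![D x, y, z] - γ ![x, D y, z] - γ ![x, y, D z] := by
  have h0 : update ![x, y, z] 0 (D (![x, y, z] 0)) = ![D x, y, z] := by
    funext i; fin_cases i <;> rfl
  have h1 : update ![x, y, z] 1 (D (![x, y, z] 1)) = ![x, D y, z] := by
    funext i; fin_cases i <;> rfl
  have h2 : update ![x, y, z] 2 (D (![x, y, z] 2)) = ![x, y, D z] := by
    funext i; fin_cases i <;> rfl
  rw [theta_apply, Fin.sum_univ_three, h0, h1, h2]
  abel

end AlternatingMap

namespace Module.Basis

variable {R M N ι : Type*} [CommSemiring R] [AddCommMonoid M] [Module R M] [AddCommGroup N]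
  [Module R N] [LinearOrder ι]

/-- Sorting the indices of an injective tuple only changes the value by a sign. -/
theorem ext_alternating_of_strictMono {k : ℕ} (e : Basis ι R M) {f g : M [⋀^Fin k]→ₗ[R] N}
    (h : ∀ v : Fin k → ι, StrictMono v → f (e ∘ v) = g (e ∘ v)) : f = g := by
  refine e.ext_alternating fun v hv => ?_
  let σ := Tuple.sort v
  have hmono : StrictMono (v ∘ σ) :=
    (Tuple.monotone_sort v).strictMono_of_injective (hv.comp σ.injective)
  have hσ := h _ hmono
  rw [← comp_assoc, f.map_perm, g.map_perm] at hσ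
  exact smul_left_cancel _ hσ

theorem ext_alternating_fin_three (e : Basis ι R M) {f g : M [⋀^Fin 3]→ₗ[R] N}
    (h : ∀ a b c, a < b → b < c → f ![e a, e b, e c] = g ![e a, e b, e c]) : f = g := by
  refine e.ext_alternating_of_strictMono fun v hv => ?_
  rw [← FinVec.etaExpand_eq (e ∘ v)]
  exact h _ _ _ (hv (show (0 : Fin 3) < 1 by decide)) (hv (show (1 : Fin 3) < 2 by decide))

end Module.Basis

lemma AlternatingMap.eq_zero_iff_forall_single_of_lt {R N ι : Type*} [CommSemiring R]
    [AddCommGroup N] [Module R N] [LinearOrder ι] [Fintype ι] (f : (ι → R) [⋀^Fin 3]→ₗ[R] N) :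
    f = 0 ↔ ∀ a b c : ι, a < b → b < c →
      f ![Pi.single a 1, Pi.single b 1, Pi.single c 1] = 0 := by
  refine ⟨fun h => by simp [h], fun h => ?_⟩
  refine (Pi.basisFun R ι).ext_alternating_fin_three fun a b c hab hbc => ?_
  simpa using h a b c hab hbc

/-- `e^{I₁ ⋯ Iₖ}`, as the minor of the coordinate matrix on the columns `I`. -/
noncomputable def dualWedge {R ι : Type*} [CommRing R] {k : ℕ} (I : Fin k → ι) :
    (ι → R) [⋀^Fin k]→ₗ[R] R :=
  detRowAlternating.compLinearMap (LinearMap.funLeft R R I)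

lemma dualWedge_apply {R ι : Type*} [CommRing R] {k : ℕ} (I : Fin k → ι) (v : Fin k → ι → R) :
    dualWedge I v = (of fun r s => v r (I s)).det := rfl

noncomputable def rhoPlus : (Fin 6 → ℝ) [⋀^Fin 3]→ₗ[ℝ] ℝ :=
  dualWedge ![0, 2, 4] - dualWedge ![0, 3, 5] - dualWedge ![1, 2, 5] - dualWedge ![1, 3, 4]

def complexStructureMatrix : Matrix (Fin 6) (Fin 6) ℝ :=
  !![0, -1, 0, 0, 0, 0;
     1, 0, 0, 0, 0, 0;
     0, 0, 0, -1, 0, 0;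
     0, 0, 1, 0, 0, 0;
     0, 0, 0, 0, 0, -1;
     0, 0, 0, 0, 1, 0]

open AlternatingMap

lemma theta_eq_zero_iff_forall_theta3 (D : (Fin 6 → ℝ) →ₗ[ℝ] (Fin 6 → ℝ))
    (γ : (Fin 6 → ℝ) [⋀^Fin 3]→ₗ[ℝ] ℝ) :
    theta D γ = 0 ↔ ∀ X Y Z, theta3 D γ X Y Z = 0 := by
  simp only [theta3, ← theta_apply_fin_three]
  refine ⟨fun h X Y Z => by simp [h], fun h => AlternatingMap.ext fun v => ?_⟩
  rw [← FinVec.etaExpand_eq v]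
  exact h _ _ _

lemma eq_rhoPlus (ρp : (Fin 6 → ℝ) [⋀^Fin 3]→ₗ[ℝ] ℝ)
    (hρp : ∀ i j k : Fin 6, i < j → j < k →
      ρp ![stdB6 i, stdB6 j, stdB6 k] = rhoPlusCoeff i j k) :
    ρp = rhoPlus := by
  refine (Pi.basisFun ℝ (Fin 6)).ext_alternating_fin_three fun a b c hab hbc => ?_
  change ρp ![stdB6 a, stdB6 b, stdB6 c] = _
  rw [hρp a b c hab hbc]
  revert a b c
  simp [Fin.forall_fin_succ, rhoPlusCoeff, rhoPlus, dualWedge_apply, det_fin_three,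
    Pi.single_apply]

lemma eq_toLin'_complexStructureMatrix (J : (Fin 6 → ℝ) →ₗ[ℝ] (Fin 6 → ℝ))
    (hJ1 : J (stdB6 0) = stdB6 1) (hJ2 : J (stdB6 1) = -stdB6 0)
    (hJ3 : J (stdB6 2) = stdB6 3) (hJ4 : J (stdB6 3) = -stdB6 2)
    (hJ5 : J (stdB6 4) = stdB6 5) (hJ6 : J (stdB6 5) = -stdB6 4) :
    J = toLin' complexStructureMatrix := by
  refine (Pi.basisFun ℝ (Fin 6)).ext fun a => ?_
  simp only [stdB6, Pi.basisFun_apply] at hJ1 hJ2 hJ3 hJ4 hJ5 hJ6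
  funext i
  fin_cases a <;> fin_cases i <;>
    simp [hJ1, hJ2, hJ3, hJ4, hJ5, hJ6, mulVec_single, complexStructureMatrix]

theorem theta_toLin'_rhoPlus_eq_zero_iff (d : Matrix (Fin 6) (Fin 6) ℝ) :
    theta (toLin' d) rhoPlus = 0 ↔
      d * complexStructureMatrix = complexStructureMatrix * d ∧ d.trace = 0 ∧
        (complexStructureMatrix * d).trace = 0 := by
  rw [eq_zero_iff_forall_single_of_lt, ← Matrix.ext_iff]
  simp only [trace, diag, mul_apply, Fin.sum_univ_six]
  simp [Fin.forall_fin_succ, complexStructureMatrix, theta_apply_fin_three, rhoPlus,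
    dualWedge_apply, det_fin_three, mulVec_single, Pi.single_apply]
  constructor <;> intro h <;> casesm* _ ∧ _ <;> and_intros <;> linarith

/-- For the 3-form `ρ⁺ = e¹³⁵ − e¹⁴⁶ − e²³⁶ − e²⁴⁵` on `ℝ⁶` and the standard complex
structure `J` (`J e₁ = e₂, J e₂ = −e₁, J e₃ = e₄, J e₄ = −e₃, J e₅ = e₆, J e₆ = −e₅`),
a linear endomorphism `D` of `ℝ⁶` satisfies `θ(D)ρ⁺ = 0` if and only if `D` is the real
representation of an element of `𝔰𝔩(3,ℂ)`, i.e. iff `D∘J = J∘D`, `tr D = 0` and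
`tr(J∘D) = 0`. -/
theorem theta_rhoPlus_eq_zero_iff_sl3C
    (ρp : AlternatingMap ℝ (Fin 6 → ℝ) ℝ (Fin 3))
    (hρp : ∀ i j k : Fin 6, i < j → j < k →
      ρp ![stdB6 i, stdB6 j, stdB6 k] = rhoPlusCoeff i j k)
    (J : (Fin 6 → ℝ) →ₗ[ℝ] (Fin 6 → ℝ))
    (hJ1 : J (stdB6 0) = stdB6 1) (hJ2 : J (stdB6 1) = -stdB6 0)
    (hJ3 : J (stdB6 2) = stdB6 3) (hJ4 : J (stdB6 3) = -stdB6 2)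
    (hJ5 : J (stdB6 4) = stdB6 5) (hJ6 : J (stdB6 5) = -stdB6 4)
    (D : (Fin 6 → ℝ) →ₗ[ℝ] (Fin 6 → ℝ)) :
    (∀ X Y Z : Fin 6 → ℝ, theta3 D ρp X Y Z = 0) ↔
    (D ∘ₗ J = J ∘ₗ D ∧ LinearMap.trace ℝ (Fin 6 → ℝ) D = 0 ∧
      LinearMap.trace ℝ (Fin 6 → ℝ) (J ∘ₗ D) = 0) := by
  obtain rfl := eq_rhoPlus ρp hρp
  obtain rfl := eq_toLin'_complexStructureMatrix J hJ1 hJ2 hJ3 hJ4 hJ5 hJ6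
  obtain ⟨d, rfl⟩ : ∃ d, D = toLin' d := ⟨_, (toLin'_toMatrix' D).symm⟩
  rw [← theta_eq_zero_iff_forall_theta3, theta_toLin'_rhoPlus_eq_zero_iff, ← toLin'_mul,
    ← toLin'_mul, toLin'.injective.eq_iff, trace_toLin'_eq, trace_toLin'_eq]
end

section
/- Fix real numbers a_{st} for s, t ∈ {1,2,3} and let 𝔤 = ℝ⁷ with standard basis e₁,…,e₇ and the bilinear antisymmetric bracket determined by [e₁,e₂] = −a₁₁e₁ − a₂₁e₂ − a₃₁e₃, [e₁,e₃] = −a₁₂e₁ − a₂₂e₂ − a₃₂e₃, [e₂,e₃] = −a₁₃e₁ − a₂₃e₂ − a₃₃e₃, and all other basis brackets zero (so that de¹ = a₁₁e¹² + a₁₂e¹³ + a₁₃e²³, de² = a₂₁e¹² + a₂₂e¹³ + a₂₃e²³, de³ = a₃₁e¹² + a₃₂e¹³ + a₃₃e²³, de^i = 0 for i ≥ 4; this is the Lie algebra of a product N³ × ℝ⁴). Assume this bracket satisfies the Jacobi identity. Let φ be the model positive 3-form φ = e¹²⁷ + e³⁴⁷ + e⁵⁶⁷ + e¹³⁵ −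 e¹⁴⁶ − e²³⁶ − e²⁴⁵. Then the Chevalley–Eilenberg differential dφ vanishes if and only if a_{st} = 0 for all s, t ∈ {1,2,3}; that is, φ is closed only if the Lie algebra is abelian (flat). -/
/-- The standard basis vectors of `ℝ⁷ = Fin 7 → ℝ`. -/
noncomputable def stdB7 : Fin 7 → (Fin 7 → ℝ) := fun i => Pi.basisFun ℝ (Fin 7) i

/-- Coefficients of the model positive 3-form
`φ = e¹²⁷ + e³⁴⁷ + e⁵⁶⁷ + e¹³⁵ − e¹⁴⁶ − e²³⁶ − e²⁴⁵` on increasing basis triples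
(0-indexed). -/
def phiCoeff : Fin 7 → Fin 7 → Fin 7 → ℝ := fun i j k =>
  if (i, j, k) = ((0 : Fin 7), (1 : Fin 7), (6 : Fin 7)) then 1
  else if (i, j, k) = ((2 : Fin 7), (3 : Fin 7), (6 : Fin 7)) then 1
  else if (i, j, k) = ((4 : Fin 7), (5 : Fin 7), (6 : Fin 7)) then 1
  else if (i, j, k) = ((0 : Fin 7), (2 : Fin 7), (4 : Fin 7)) then 1
  else if (i, j, k) = ((0 : Fin 7), (3 : Fin 7), (5 : Fin 7)) then -1
  else if (i, j, k) = ((1 : Fin 7), (2 : Fin 7), (5 : Fin 7)) then -1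
  else if (i, j, k) = ((1 : Fin 7), (3 : Fin 7), (4 : Fin 7)) then -1
  else 0

/-- The Chevalley–Eilenberg differential of a 3-form `γ` with respect to the bracket `br`:
`(dγ)(W,X,Y,Z) = −γ([W,X],Y,Z) + γ([W,Y],X,Z) − γ([W,Z],X,Y) − γ([X,Y],W,Z)
  + γ([X,Z],W,Y) − γ([Y,Z],W,X)`. -/
def ceDiff3 (br : (Fin 7 → ℝ) →ₗ[ℝ] (Fin 7 → ℝ) →ₗ[ℝ] (Fin 7 → ℝ))
    (γ : AlternatingMap ℝ (Fin 7 → ℝ) ℝ (Fin 3)) (W X Y Z : Fin 7 → ℝ) : ℝ :=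
  -γ ![br W X, Y, Z] + γ ![br W Y, X, Z] - γ ![br W Z, X, Y]
    - γ ![br X Y, W, Z] + γ ![br X Z, W, Y] - γ ![br Y Z, W, X]

lemma phi_slot0_zero (φ : AlternatingMap ℝ (Fin 7 → ℝ) ℝ (Fin 3)) (y z : Fin 7 → ℝ) :
    φ ![0, y, z] = 0 := φ.map_coord_zero 0 rfl

lemma phi_expand (φ : AlternatingMap ℝ (Fin 7 → ℝ) ℝ (Fin 3)) (u v w y z : Fin 7 → ℝ)
    (c0 c1 c2 : ℝ) :
    φ ![c0 • u + c1 • v + c2 • w, y, z]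
      = c0 * φ ![u, y, z] + c1 * φ ![v, y, z] + c2 * φ ![w, y, z] := by
  have h1 : ∀ x : Fin 7 → ℝ, ![x, y, z] = Function.update ![(0 : Fin 7 → ℝ), y, z] 0 x := by
    intro x; ext i j; fin_cases i <;> simp
  rw [h1, φ.map_update_add, φ.map_update_add, φ.map_update_smul, φ.map_update_smul,
    φ.map_update_smul, ← h1, ← h1, ← h1]
  simp [smul_eq_mul]

lemma sum_basis (X : Fin 7 → ℝ) : X = ∑ i, X i • stdB7 i := by
  funext k
  simp [stdB7, Pi.basisFun_apply, Finset.sum_apply, Pi.single_apply, Finset.sum_ite_eq]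

/-- Fix real numbers `a_{st}` (`s,t ∈ {1,2,3}`) and equip `ℝ⁷` with the antisymmetric
bilinear bracket determined by `[e₁,e₂] = −a₁₁e₁ − a₂₁e₂ − a₃₁e₃`,
`[e₁,e₃] = −a₁₂e₁ − a₂₂e₂ − a₃₂e₃`, `[e₂,e₃] = −a₁₃e₁ − a₂₃e₂ − a₃₃e₃`, all other basis
brackets zero (the Lie algebra of a product `N³ × ℝ⁴`), and assume it satisfies the Jacobi
identity.  Then the Chevalley–Eilenberg differential of the model positive 3-form
`φ = e¹²⁷ + e³⁴⁷ + e⁵⁶⁷ + e¹³⁵ − e¹⁴⁶ − e²³⁶ − e²⁴⁵` vanishes if and only if `a_{st} = 0`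
for all `s, t`; i.e. `φ` is closed only if the Lie algebra is abelian (flat). -/
theorem closed_G2_on_N3_times_R4_iff_flat
    (a : Fin 3 → Fin 3 → ℝ)
    (br : (Fin 7 → ℝ) →ₗ[ℝ] (Fin 7 → ℝ) →ₗ[ℝ] (Fin 7 → ℝ))
    (h_anti : ∀ X Y, br X Y = -br Y X)
    (h_jacobi : ∀ X Y Z, br X (br Y Z) + br Y (br Z X) + br Z (br X Y) = 0)
    (h12 : br (stdB7 0) (stdB7 1)
      = -(a 0 0 • stdB7 0) - a 1 0 • stdB7 1 - a 2 0 • stdB7 2)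
    (h13 : br (stdB7 0) (stdB7 2)
      = -(a 0 1 • stdB7 0) - a 1 1 • stdB7 1 - a 2 1 • stdB7 2)
    (h23 : br (stdB7 1) (stdB7 2)
      = -(a 0 2 • stdB7 0) - a 1 2 • stdB7 1 - a 2 2 • stdB7 2)
    (h_zero : ∀ i j : Fin 7, i < j → 3 ≤ (j : ℕ) → br (stdB7 i) (stdB7 j) = 0)
    (φ : AlternatingMap ℝ (Fin 7 → ℝ) ℝ (Fin 3))
    (hφ : ∀ i j k : Fin 7, i < j → j < k →
      φ ![stdB7 i, stdB7 j, stdB7 k] = phiCoeff i j k) :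
    (∀ W X Y Z : Fin 7 → ℝ, ceDiff3 br φ W X Y Z = 0) ↔
      (∀ s t : Fin 3, a s t = 0) := by
  
  constructor
  · intro h
    have main : ∀ (i j : Fin 7) (t : Fin 3) (k l : Fin 7),
        i < j → j < k → k < l → 3 ≤ (k : ℕ) →
        br (stdB7 i) (stdB7 j) = -(a 0 t • stdB7 0) - a 1 t • stdB7 1 - a 2 t • stdB7 2 →
        a 0 t * phiCoeff 0 k l + a 1 t * phiCoeff 1 k l + a 2 t * phiCoeff 2 k l = 0 := by
      intro i j t k l hij hjk hkl hk3 hbr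
      have hl3 : 3 ≤ (l : ℕ) := by omega
      have h0 := h (stdB7 i) (stdB7 j) (stdB7 k) (stdB7 l)
      simp only [ceDiff3] at h0
      rw [hbr, h_zero i k (hij.trans hjk) hk3, h_zero i l ((hij.trans hjk).trans hkl) hl3,
        h_zero j k hjk hk3, h_zero j l (hjk.trans hkl) hl3, h_zero k l hkl hl3] at h0
      rw [show -(a 0 t • stdB7 0) - a 1 t • stdB7 1 - a 2 t • stdB7 2
          = (-(a 0 t)) • stdB7 0 + (-(a 1 t)) • stdB7 1 + (-(a 2 t)) • stdB7 2 from by module,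
        phi_expand] at h0
      simp only [phi_slot0_zero] at h0
      have hk0 : (0 : Fin 7) < k := by omega
      have hk1 : (1 : Fin 7) < k := by omega
      have hk2 : (2 : Fin 7) < k := by omega
      rw [hφ 0 k l hk0 hkl, hφ 1 k l hk1 hkl, hφ 2 k l hk2 hkl] at h0
      linear_combination h0
    intro s t
    fin_cases s <;> fin_cases t
    · simpa [phiCoeff] using main 0 1 0 3 5 (by decide) (by decide) (by decide) (by decide) h12
    · simpa [phiCoeff] using main 0 2 1 3 5 (by decide) (by decide) (by decide) (by decide) h13
    · simpa [phiCoeff] using main 1 2 2 3 5 (by decide) (by decide) (by decide) (by decide) h23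
    · simpa [phiCoeff] using main 0 1 0 3 4 (by decide) (by decide) (by decide) (by decide) h12
    · simpa [phiCoeff] using main 0 2 1 3 4 (by decide) (by decide) (by decide) (by decide) h13
    · simpa [phiCoeff] using main 1 2 2 3 4 (by decide) (by decide) (by decide) (by decide) h23
    · simpa [phiCoeff] using main 0 1 0 3 6 (by decide) (by decide) (by decide) (by decide) h12
    · simpa [phiCoeff] using main 0 2 1 3 6 (by decide) (by decide) (by decide) (by decide) h13
    · simpa [phiCoeff] using main 1 2 2 3 6 (by decide) (by decide) (by decide) (by decide) h23
  · intro ha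
    have hself : ∀ x, br x x = 0 := by
      intro x
      funext k
      have hx := congrFun (h_anti x x) k
      simp only [Pi.neg_apply] at hx
      simp only [Pi.zero_apply]
      linarith
    have key : ∀ i j : Fin 7, i < j → br (stdB7 i) (stdB7 j) = 0 := by
      intro i j hij
      by_cases h3 : 3 ≤ (j : ℕ)
      · exact h_zero i j hij h3
      · have hcases : (i = 0 ∧ j = 1) ∨ (i = 0 ∧ j = 2) ∨ (i = 1 ∧ j = 2) := by omega
        rcases hcases with ⟨hi, hj⟩ | ⟨hi, hj⟩ | ⟨hi, hj⟩ <;> subst hi <;> subst hj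
        · rw [h12]; simp [ha]
        · rw [h13]; simp [ha]
        · rw [h23]; simp [ha]
    have hb : ∀ i j : Fin 7, br (stdB7 i) (stdB7 j) = 0 := by
      intro i j
      rcases lt_trichotomy i j with hij | hij | hij
      · exact key i j hij
      · rw [hij]; exact hself _
      · rw [h_anti, key j i hij, neg_zero]
    have hbz : ∀ X Y, br X Y = 0 := by
      intro X Y
      rw [sum_basis X, sum_basis Y]
      simp [map_sum, map_smul, LinearMap.sum_apply, LinearMap.smul_apply, hb]
    intro W X Y Z
    simp [ceDiff3, hbz, phi_slot0_zero]
end
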